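/- arXiv:2309.05546 — 6 statements merged into one kernel-verified Lean document; each statement's English description precedes it below -/
import Mathlib

section
/- Let H and L be real d×d matrices such that H is symmetric and invertible and the product HL is skew-symmetric, i.e. (HL)ᵀ = −HL. Then the matrix H + L is invertible and, regarded as a complex matrix, it has no purely imaginary eigenvalue; equivalently, every complex eigenvalue μ of H + L satisfies Re μ ≠ 0. -/
open Matrix Complex

private lemma star_dot (d : ℕ) (u m : Fin d → ℂ) :
    star (u ⬝ᵥ m) = star u ⬝ᵥ star m := by
  simp only [dotProduct, star_sum, star_mul', Pi.star_apply]

private lemma key_eig_lemma (d : ℕ) (H L : Matrix (Fin d) (Fin d) ℝ)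
    (hHsymm : H.IsSymm) (hHinv : IsUnit H)
    (hskew : (H * L)ᵀ = -(H * L))
    (μ : ℂ) (v : Fin d → ℂ) (hv : v ≠ 0)
    (heq : ((H + L).map (Complex.ofReal : ℝ → ℂ)) *ᵥ v = μ • v) :
    μ.re ≠ 0 := by
  set Hc := H.map (Complex.ofReal : ℝ → ℂ) with hHc
  set Lc := L.map (Complex.ofReal : ℝ → ℂ) with hLc
  have hHcH : Hcᴴ = Hc := by
    ext i j
    simp [hHc, conjTranspose_apply, Matrix.map_apply, hHsymm.apply]
  have hmapK : Hc * Lc = (H * L).map (Complex.ofReal : ℝ → ℂ) := by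
    ext i j
    simp [hHc, hLc, Matrix.mul_apply, Matrix.map_apply]
  have hKH : (Hc * Lc)ᴴ = -(Hc * Lc) := by
    ext i j
    have h1 : (H * L) j i = -(H * L) i j := by
      have := congrFun (congrFun hskew i) j
      simpa [transpose_apply] using this
    simp [hmapK, conjTranspose_apply, Matrix.map_apply, h1]
  have hwne : Hc *ᵥ v ≠ 0 := by
    intro h0
    have hdet : Hc.det = 0 := (Matrix.exists_mulVec_eq_zero_iff).mp ⟨v, hv, h0⟩
    have hdet' : ((H.det : ℂ)) = 0 := by
      rw [show (H.det : ℂ) = (Complex.ofRealHom : ℝ →+* ℂ) H.det from rfl,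
        RingHom.map_det, RingHom.mapMatrix_apply]
      exact hdet
    have : H.det ≠ 0 := ((Matrix.isUnit_iff_isUnit_det H).mp hHinv).ne_zero
    exact this (by exact_mod_cast hdet')
  have hstarw : star v ᵥ* Hc = star (Hc *ᵥ v) := by
    rw [star_mulVec, hHcH]
  -- a := star w ⬝ᵥ w has positive real part
  have hare : 0 < (star (Hc *ᵥ v) ⬝ᵥ (Hc *ᵥ v)).re := by
    have heqa : star (Hc *ᵥ v) ⬝ᵥ (Hc *ᵥ v)
        = ((∑ i, Complex.normSq ((Hc *ᵥ v) i) : ℝ) : ℂ) := by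
      simp only [dotProduct, Pi.star_apply, ofReal_sum]
      exact Finset.sum_congr rfl fun i _ => (Complex.normSq_eq_conj_mul_self).symm ▸ rfl
    rw [heqa, Complex.ofReal_re]
    obtain ⟨i, hi⟩ : ∃ i, (Hc *ᵥ v) i ≠ 0 := by
      by_contra hcon
      push_neg at hcon
      exact hwne (funext hcon)
    exact Finset.sum_pos' (fun j _ => Complex.normSq_nonneg _)
      ⟨i, Finset.mem_univ i, Complex.normSq_pos.mpr hi⟩
  -- b := star v ⬝ᵥ (Hc*Lc) *ᵥ v has zero real part
  have hbre : (star v ⬝ᵥ ((Hc * Lc) *ᵥ v)).re = 0 := by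
    have hsb : star (star v ⬝ᵥ ((Hc * Lc) *ᵥ v)) = -(star v ⬝ᵥ ((Hc * Lc) *ᵥ v)) := by
      rw [star_dot, star_star, star_mulVec, hKH, vecMul_neg, dotProduct_neg,
        dotProduct_comm, ← dotProduct_mulVec]
    have h := congrArg Complex.re hsb
    have hre : (star (star v ⬝ᵥ ((Hc * Lc) *ᵥ v))).re = (star v ⬝ᵥ ((Hc * Lc) *ᵥ v)).re := rfl
    rw [hre, Complex.neg_re] at h
    linarith
  -- c := star v ⬝ᵥ Hc *ᵥ v has zero imaginary part
  have hcim : (star v ⬝ᵥ (Hc *ᵥ v)).im = 0 := by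
    have hsc : star (star v ⬝ᵥ (Hc *ᵥ v)) = star v ⬝ᵥ (Hc *ᵥ v) := by
      rw [star_dot, star_star, star_mulVec, hHcH, dotProduct_comm, ← dotProduct_mulVec]
    have h := congrArg Complex.im hsc
    have him : (star (star v ⬝ᵥ (Hc *ᵥ v))).im = -(star v ⬝ᵥ (Hc *ᵥ v)).im := rfl
    rw [him] at h
    linarith
  -- main equation: a + b = μ * c
  have hsum : (H + L).map (Complex.ofReal : ℝ → ℂ) = Hc + Lc := by
    ext i j
    simp [hHc, hLc, Matrix.map_apply]
  have hmain : star (Hc *ᵥ v) ⬝ᵥ (Hc *ᵥ v) + star v ⬝ᵥ ((Hc * Lc) *ᵥ v)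
      = μ * (star v ⬝ᵥ (Hc *ᵥ v)) := by
    have h1 : star v ⬝ᵥ (Hc *ᵥ ((Hc + Lc) *ᵥ v)) = μ * (star v ⬝ᵥ (Hc *ᵥ v)) := by
      rw [← hsum, heq, mulVec_smul, dotProduct_smul, smul_eq_mul]
    have h2 : Hc *ᵥ ((Hc + Lc) *ᵥ v) = Hc *ᵥ (Hc *ᵥ v) + (Hc * Lc) *ᵥ v := by
      simp only [add_mulVec, mulVec_add, mulVec_mulVec]
    have h3 : star v ⬝ᵥ (Hc *ᵥ (Hc *ᵥ v)) = star (Hc *ᵥ v) ⬝ᵥ (Hc *ᵥ v) := by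
      rw [dotProduct_mulVec, hstarw]
    rw [h2, dotProduct_add, h3] at h1
    exact h1
  have hre : (star (Hc *ᵥ v) ⬝ᵥ (Hc *ᵥ v)).re
      = μ.re * (star v ⬝ᵥ (Hc *ᵥ v)).re := by
    have h := congrArg Complex.re hmain
    simp only [Complex.add_re, Complex.mul_re, hbre, hcim, mul_zero, sub_zero,
      add_zero] at h
    exact h
  intro hμ
  rw [hμ, zero_mul] at hre
  linarith

/-- If `H` is a symmetric invertible real `d × d` matrix and `H * L` is
skew-symmetric, then `H + L` is invertible and, viewed as a complex matrix, it has no purely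
imaginary eigenvalue: every complex eigenvalue `μ` of `H + L` satisfies `μ.re ≠ 0`. -/
theorem matrix_sum_invertible_no_imaginary_eigenvalue
    (d : ℕ) (hd : 1 ≤ d) (H L : Matrix (Fin d) (Fin d) ℝ)
    (hHsymm : H.IsSymm) (hHinv : IsUnit H)
    (hskew : (H * L)ᵀ = -(H * L)) :
    IsUnit (H + L) ∧
      ∀ μ : ℂ,
        Module.End.HasEigenvalue
          (Matrix.toLin' ((H + L).map (Complex.ofReal : ℝ → ℂ))) μ → μ.re ≠ 0 := by
  constructor
  · by_contra hcon
    have hdet : (H + L).det = 0 := by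
      by_contra h0
      exact hcon ((Matrix.isUnit_iff_isUnit_det _).mpr (isUnit_iff_ne_zero.mpr h0))
    have hdetC : ((H + L).map (Complex.ofReal : ℝ → ℂ)).det = 0 := by
      rw [show (H + L).map (Complex.ofReal : ℝ → ℂ)
          = (Complex.ofRealHom : ℝ →+* ℂ).mapMatrix (H + L) from rfl,
        ← RingHom.map_det, hdet]
      simp
    obtain ⟨v, hv, hv0⟩ := (Matrix.exists_mulVec_eq_zero_iff).mpr hdetC
    have := key_eig_lemma d H L hHsymm hHinv hskew 0 v hv (by rw [hv0]; simp)
    simp at this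
  · intro μ hμ
    obtain ⟨v, hv⟩ := hμ.exists_hasEigenvector
    have hv0 : v ≠ 0 := hv.2
    have heq : ((H + L).map (Complex.ofReal : ℝ → ℂ)) *ᵥ v = μ • v := by
      have := Module.End.mem_eigenspace_iff.mp hv.1
      rwa [Matrix.toLin'_apply] at this
    exact key_eig_lemma d H L hHsymm hHinv hskew μ v hv0 heq
end

section
/- Let U : ℝ^d → ℝ be continuous and coercive. Fix H₀ ∈ ℝ, let 𝓗 be a connected component of the set {x ∈ ℝ^d : U(x) ≤ H₀}, and let 𝒰 be an open set with 𝓗 ⊆ 𝒰. Then there exists a positive integer N such that the connected component of {x ∈ ℝ^d : U(x) ≤ H₀ + 1/N} containing 𝓗 is contained in 𝒰. -/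
open Set

/-- A sublevel set of a continuous coercive function is compact. -/
lemma isCompact_sublevel_aux {X : Type*} [TopologicalSpace X] {U : X → ℝ}
    (hU : Continuous U) (hcoer : Filter.Tendsto U (Filter.cocompact X) Filter.atTop)
    (c : ℝ) : IsCompact {x | U x ≤ c} := by
  have h1 : U ⁻¹' (Set.Ioi c) ∈ Filter.cocompact X := hcoer (Filter.Ioi_mem_atTop c)
  obtain ⟨K, hK, hKsub⟩ := Filter.mem_cocompact.mp h1
  refine hK.of_isClosed_subset (isClosed_le hU continuous_const) (fun x hx => ?_)
  by_contra hxK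
  exact absurd (hKsub hxK) (by simpa using hx)

/-- A connected component in a compact set is compact. -/
lemma isCompact_connectedComponentIn_aux {X : Type*} [TopologicalSpace X] {F : Set X}
    (hF : IsCompact F) (x : X) : IsCompact (connectedComponentIn F x) := by
  by_cases hx : x ∈ F
  · rw [connectedComponentIn_eq_image hx]
    have : CompactSpace F := isCompact_iff_compactSpace.mp hF
    exact (isClosed_connectedComponent.isCompact).image continuous_subtype_val
  · rw [connectedComponentIn_eq_empty hx]; exact isCompact_empty

/-- The intersection of a decreasing sequence of compact preconnected sets is preconnected. -/
lemma isPreconnected_iInter_antitone_aux {X : Type*} [TopologicalSpace X] [T2Space X]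
    (K : ℕ → Set X) (hcomp : ∀ n, IsCompact (K n)) (hconn : ∀ n, IsPreconnected (K n))
    (hanti : Antitone K) : IsPreconnected (⋂ n, K n) := by
  rw [isPreconnected_closed_iff]
  intro F F' hF hF' hcover hne hne'
  by_contra hcon
  rw [Set.not_nonempty_iff_eq_empty] at hcon
  set A := (⋂ n, K n) ∩ F with hA
  set B := (⋂ n, K n) ∩ F' with hB
  have hKclosed : ∀ n, IsClosed (K n) := fun n => (hcomp n).isClosed
  have hIclosed : IsClosed (⋂ n, K n) := isClosed_iInter hKclosed
  have hAcomp : IsCompact A :=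
    (hcomp 0).of_isClosed_subset (hIclosed.inter hF)
      (fun x hx => (Set.mem_iInter.mp hx.1) 0)
  have hBcomp : IsCompact B :=
    (hcomp 0).of_isClosed_subset (hIclosed.inter hF')
      (fun x hx => (Set.mem_iInter.mp hx.1) 0)
  have hdisj : Disjoint A B := by
    rw [Set.disjoint_iff_inter_eq_empty]
    rw [show A ∩ B = (⋂ n, K n) ∩ (F ∩ F') by rw [hA, hB]; ext x; simp; tauto]
    exact hcon
  obtain ⟨u, v, hu, hv, hAu, hBv, huv⟩ :=
    SeparatedNhds.of_isCompact_isCompact hAcomp hBcomp hdisj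
  have hsubuv : (⋂ n, K n) ⊆ u ∪ v := by
    intro x hx
    rcases hcover hx with h | h
    · exact Or.inl (hAu ⟨hx, h⟩)
    · exact Or.inr (hBv ⟨hx, h⟩)
  -- some K n is contained in u ∪ v
  have : ∃ n, K n \ (u ∪ v) = ∅ := by
    by_contra hall
    push_neg at hall
    have hne2 : ∀ n, (K n \ (u ∪ v)).Nonempty := hall
    have hdir : Directed (· ⊇ ·) (fun n => K n \ (u ∪ v)) := by
      intro m n
      exact ⟨max m n, Set.diff_subset_diff_left (hanti (le_max_left m n)),
        Set.diff_subset_diff_left (hanti (le_max_right m n))⟩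
    have hnem := IsCompact.nonempty_iInter_of_directed_nonempty_isCompact_isClosed
      (fun n => K n \ (u ∪ v)) hdir hne2
      (fun n => (hcomp n).diff (hu.union hv))
      (fun n => (hKclosed n).sdiff (hu.union hv))
    obtain ⟨x, hx⟩ := hnem
    rw [Set.mem_iInter] at hx
    have hx1 : x ∈ ⋂ n, K n := Set.mem_iInter.mpr fun n => (hx n).1
    exact (hx 0).2 (hsubuv hx1)
  obtain ⟨n, hn⟩ := this
  have hKn : K n ⊆ u ∪ v := by
    rw [Set.diff_eq_empty] at hn; exact hn
  have hKnu : (K n ∩ u).Nonempty := by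
    obtain ⟨x, hx⟩ := hne
    exact ⟨x, Set.mem_iInter.mp hx.1 n, hAu ⟨hx.1, hx.2⟩⟩
  have hKnv : (K n ∩ v).Nonempty := by
    obtain ⟨x, hx⟩ := hne'
    exact ⟨x, Set.mem_iInter.mp hx.1 n, hBv ⟨hx.1, hx.2⟩⟩
  obtain ⟨x, hx⟩ := hconn n u v hu hv hKn hKnu hKnv
  exact Set.disjoint_iff.mp huv ⟨hx.2.1, hx.2.2⟩

/-- Let `U : ℝ^d → ℝ` be continuous and coercive, let `𝓗` be a connected
component of the sublevel set `{x : U x ≤ H₀}`, and let `𝒰` be an open set containing `𝓗`.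
Then there is a positive integer `N` such that the connected component of
`{x : U x ≤ H₀ + 1/N}` containing `𝓗` is contained in `𝒰`. -/
theorem sublevel_component_cover
    (d : ℕ) (hd : 1 ≤ d) (U : EuclideanSpace ℝ (Fin d) → ℝ)
    (hU : Continuous U)
    (hcoer : Filter.Tendsto U (Filter.cocompact (EuclideanSpace ℝ (Fin d))) Filter.atTop)
    (H₀ : ℝ) (𝓗 : Set (EuclideanSpace ℝ (Fin d)))
    (h𝓗 : ∃ x₀ ∈ {x | U x ≤ H₀}, 𝓗 = connectedComponentIn {x | U x ≤ H₀} x₀)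
    (𝒰 : Set (EuclideanSpace ℝ (Fin d))) (h𝒰 : IsOpen 𝒰) (hsub : 𝓗 ⊆ 𝒰) :
    ∃ N : ℕ, 0 < N ∧ ∀ x ∈ 𝓗,
      connectedComponentIn {y | U y ≤ H₀ + 1 / (N : ℝ)} x ⊆ 𝒰 := by
  obtain ⟨x₀, hx₀, rfl⟩ := h𝓗
  set S : ℕ → Set (EuclideanSpace ℝ (Fin d)) :=
    fun n => {y | U y ≤ H₀ + 1 / (n + 1 : ℝ)} with hS
  set K : ℕ → Set (EuclideanSpace ℝ (Fin d)) :=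
    fun n => connectedComponentIn (S n) x₀ with hKdef
  have hSanti : Antitone S := by
    intro m n hmn y hy
    have h1 : (1 : ℝ) / (n + 1) ≤ 1 / (m + 1) := by
      apply one_div_le_one_div_of_le
      · positivity
      · have := (Nat.cast_le (α := ℝ)).mpr hmn; linarith
    simp only [hS, Set.mem_setOf_eq] at hy ⊢
    linarith
  have hx₀S : ∀ n, x₀ ∈ S n := by
    intro n
    have : (0:ℝ) ≤ 1 / (n + 1 : ℝ) := by positivity
    simp only [hS, Set.mem_setOf_eq]
    linarith [hx₀.out]
  have hScomp : ∀ n, IsCompact (S n) := fun n => isCompact_sublevel_aux hU hcoer _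
  have hKcomp : ∀ n, IsCompact (K n) := fun n =>
    isCompact_connectedComponentIn_aux (hScomp n) x₀
  have hKconn : ∀ n, IsPreconnected (K n) := fun n => isPreconnected_connectedComponentIn
  have hKanti : Antitone K := fun m n hmn =>
    connectedComponentIn_mono x₀ (hSanti hmn)
  have hx₀K : ∀ n, x₀ ∈ K n := fun n => mem_connectedComponentIn (hx₀S n)
  -- the intersection is contained in the sublevel set at H₀
  have hIsub : (⋂ n, K n) ⊆ {x | U x ≤ H₀} := by
    intro x hx
    rw [Set.mem_iInter] at hx
    have h1 : ∀ n : ℕ, U x ≤ H₀ + 1 / (n + 1 : ℝ) := fun n =>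
      connectedComponentIn_subset (S n) x₀ (hx n)
    show U x ≤ H₀
    refine le_of_forall_pos_le_add fun ε hε => ?_
    obtain ⟨n, hn⟩ := exists_nat_one_div_lt hε
    exact le_trans (h1 n) (by linarith)
  -- hence contained in 𝓗, hence in 𝒰
  have hIconn : IsPreconnected (⋂ n, K n) :=
    isPreconnected_iInter_antitone_aux K hKcomp hKconn hKanti
  have hI𝓗 : (⋂ n, K n) ⊆ connectedComponentIn {x | U x ≤ H₀} x₀ :=
    hIconn.subset_connectedComponentIn (Set.mem_iInter.mpr hx₀K) hIsub
  have hI𝒰 : (⋂ n, K n) ⊆ 𝒰 := fun x hx => hsub (hI𝓗 hx)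
  -- find n with K n ⊆ 𝒰
  have hex : ∃ n, K n \ 𝒰 = ∅ := by
    by_contra hall
    push_neg at hall
    have hne2 : ∀ n, (K n \ 𝒰).Nonempty := hall
    have hdir : Directed (· ⊇ ·) (fun n => K n \ 𝒰) := by
      intro m n
      exact ⟨max m n, Set.diff_subset_diff_left (hKanti (le_max_left m n)),
        Set.diff_subset_diff_left (hKanti (le_max_right m n))⟩
    obtain ⟨x, hx⟩ := IsCompact.nonempty_iInter_of_directed_nonempty_isCompact_isClosed
      (fun n => K n \ 𝒰) hdir hne2 (fun n => (hKcomp n).diff h𝒰)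
      (fun n => (hKcomp n).isClosed.sdiff h𝒰)
    rw [Set.mem_iInter] at hx
    have hx1 : x ∈ ⋂ n, K n := Set.mem_iInter.mpr fun n => (hx n).1
    exact (hx 0).2 (hI𝒰 hx1)
  obtain ⟨n, hn⟩ := hex
  have hKn𝒰 : K n ⊆ 𝒰 := by rw [Set.diff_eq_empty] at hn; exact hn
  refine ⟨n + 1, Nat.succ_pos n, fun x hx => ?_⟩
  have hcast : ((n + 1 : ℕ) : ℝ) = (n : ℝ) + 1 := by push_cast; ring
  have hSeq : {y | U y ≤ H₀ + 1 / ((n + 1 : ℕ) : ℝ)} = S n := by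
    rw [hS]; simp [hcast]
  rw [hSeq]
  -- x ∈ 𝓗 ⊆ K n, so the components coincide
  have hx𝓗Kn : connectedComponentIn {x | U x ≤ H₀} x₀ ⊆ K n :=
    connectedComponentIn_mono x₀ (fun y hy => by
      have : (0:ℝ) ≤ 1 / (n + 1 : ℝ) := by positivity
      simp only [hS, Set.mem_setOf_eq]
      linarith [hy.out])
  have hxKn : x ∈ K n := hx𝓗Kn hx
  rw [← connectedComponentIn_eq hxKn]
  exact hKn𝒰
end

section
/- Let U : ℝ^d → ℝ be continuously differentiable and let p ∈ ℝ^d be a point with ∇U(p) ≠ 0. Then for all sufficiently small r > 0 the following hold: the set B(p,r) ∖ {x : U(x) = U(p)} has exactly two connected components, namely B(p,r) ∩ {x : U(x) < U(p)} and B(p,r) ∩ {x : U(x) > U(p)}; in particular the set A(p,r) is connected; moreover there exists a continuous path z : [0,1] → B(p,r) with z(0) = p and U(z(t)) < U(p) for all t ∈ (0,1]. -/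
/-!
Near `p` the function `U` is uniformly approximated by its linearisation: on a small ball,
`|U y - U x - ⟪g, y - x⟫| ≤ c ‖y - x‖` with `g = ∇U(p)` and `3c < ‖g‖`. Then every point `x` of
the ball with `U x < U p` can be joined inside `{U < U p}` by a straight segment to the point at
the same distance from `p` on the ray `p - s g`, and `U < U p` along that whole ray. Hence both
`B(p, r) ∩ {U < U p}` and (applying this to `-U`) `B(p, r) ∩ {U > U p}` are path connected; being
disjoint and open, they are the two components of their union.
-/

/-- `T` has exactly two connected components, namely `S₁` and `S₂`. -/
def ExactlyTwoComponents {X : Type*} [TopologicalSpace X] (T S₁ S₂ : Set X) : Prop :=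
  S₁.Nonempty ∧ S₂.Nonempty ∧ S₁ ≠ S₂ ∧
    (∀ x ∈ S₁, connectedComponentIn T x = S₁) ∧
    (∀ x ∈ S₂, connectedComponentIn T x = S₂) ∧
    ∀ x ∈ T, connectedComponentIn T x = S₁ ∨ connectedComponentIn T x = S₂

open Metric Set
open scoped RealInnerProductSpace NNReal

theorem ApproximatesLinearOn.neg {𝕜 E F : Type*} [NontriviallyNormedField 𝕜]
    [NormedAddCommGroup E] [NormedSpace 𝕜 E] [NormedAddCommGroup F] [NormedSpace 𝕜 F]
    {f : E → F} {f' : E →L[𝕜] F} {s : Set E} {c : ℝ≥0} (hf : ApproximatesLinearOn f f' s c) :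
    ApproximatesLinearOn (-f) (-f') s c := fun x hx y hy ↦ by
  have : (-f) x - (-f) y - (-f') (x - y) = -(f x - f y - f' (x - y)) := by
    simp only [Pi.neg_apply, neg_apply]
    abel
  rw [this, norm_neg]
  exact hf x hx y hy

theorem diff_setOf_eq_eq_union {α β : Type*} [LinearOrder β] (s : Set α) (f : α → β) (b : β) :
    s \ {x | f x = b} = s ∩ {x | f x < b} ∪ s ∩ {x | b < f x} := by
  ext x
  simp only [mem_sdiff, mem_union, mem_inter_iff, mem_ofPred_eq, ← and_or_left, lt_or_lt_iff_ne]

section Components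

variable {X : Type*} [TopologicalSpace X] {S₁ S₂ : Set X}

theorem connectedComponentIn_union_eq_left (h₁ : IsOpen S₁) (h₂ : IsOpen S₂)
    (hdisj : Disjoint S₁ S₂) (hS₁ : IsPreconnected S₁) {x : X} (hx : x ∈ S₁) :
    connectedComponentIn (S₁ ∪ S₂) x = S₁ :=
  (isPreconnected_connectedComponentIn.subset_left_of_subset_union h₁ h₂ hdisj
    (connectedComponentIn_subset _ _) ⟨x, mem_connectedComponentIn (.inl hx), hx⟩).antisymm
    (hS₁.subset_connectedComponentIn hx subset_union_left)

theorem exactlyTwoComponents_union (h₁ : IsOpen S₁) (h₂ : IsOpen S₂) (hdisj : Disjoint S₁ S₂)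
    (hS₁ : IsConnected S₁) (hS₂ : IsConnected S₂) : ExactlyTwoComponents (S₁ ∪ S₂) S₁ S₂ := by
  have eq₁ : ∀ x ∈ S₁, connectedComponentIn (S₁ ∪ S₂) x = S₁ := fun x ↦
    connectedComponentIn_union_eq_left h₁ h₂ hdisj hS₁.isPreconnected
  have eq₂ : ∀ x ∈ S₂, connectedComponentIn (S₁ ∪ S₂) x = S₂ := fun x hx ↦ by
    rw [union_comm]; exact connectedComponentIn_union_eq_left h₂ h₁ hdisj.symm hS₂.isPreconnected hx
  refine ⟨hS₁.nonempty, hS₂.nonempty, fun h ↦ ?_, eq₁, eq₂, ?_⟩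
  · obtain ⟨x, hx⟩ := hS₁.nonempty
    exact disjoint_left.mp hdisj hx (h ▸ hx)
  · rintro x (hx | hx)
    exacts [.inl (eq₁ x hx), .inr (eq₂ x hx)]

end Components

section Sublevel

variable {E : Type*} [NormedAddCommGroup E] [InnerProductSpace ℝ E] {U : E → ℝ} {p g : E}
  {r : ℝ} {c : ℝ≥0}

theorem ApproximatesLinearOn.sub_le_inner {s : Set E}
    (hU : ApproximatesLinearOn U (innerSL ℝ g) s c) {x y : E} (hx : x ∈ s) (hy : y ∈ s) : U y - U x ≤ ⟪g, y - x⟫ + c * ‖y - x‖ := by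
  have := (abs_le.mp (hU y hy x hx)).2
  rw [innerSL_apply_apply] at this
  linarith

theorem sub_smul_mem_ball {s : ℝ} (hs : 0 ≤ s) (hsr : s * ‖g‖ < r) : p - s • g ∈ ball p r := by
  rwa [mem_ball, dist_eq_norm, sub_sub_cancel_left, norm_neg, norm_smul, Real.norm_of_nonneg hs]

theorem ApproximatesLinearOn.apply_sub_smul_lt
    (hU : ApproximatesLinearOn U (innerSL ℝ g) (ball p r) c) (hc : c < ‖g‖) {s : ℝ} (hs : 0 < s)
    (hsr : s * ‖g‖ < r) : U (p - s • g) < U p := by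
  have hp : p ∈ ball p r := mem_ball_self ((mul_nonneg hs.le (norm_nonneg g)).trans_lt hsr)
  have := hU.sub_le_inner hp (sub_smul_mem_ball hs.le hsr)
  rw [sub_sub_cancel_left, inner_neg_right, real_inner_smul_right, real_inner_self_eq_norm_sq,
    norm_neg, norm_smul, Real.norm_of_nonneg hs.le] at this
  have hg : 0 < ‖g‖ := c.coe_nonneg.trans_lt hc
  nlinarith [mul_pos hs hg]

theorem ApproximatesLinearOn.joinedIn_sub_smul
    (hU : ApproximatesLinearOn U (innerSL ℝ g) (ball p r) c) (hc : c < ‖g‖) {s t : ℝ} (hs : 0 < s)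
    (hsr : s * ‖g‖ < r) (ht : 0 < t) (htr : t * ‖g‖ < r) :
    JoinedIn (ball p r ∩ {x | U x < U p}) (p - s • g) (p - t • g) := by
  have hg : 0 < ‖g‖ := c.coe_nonneg.trans_lt hc
  have hs' : s ∈ Ioo 0 (r / ‖g‖) := ⟨hs, (lt_div_iff₀ hg).mpr hsr⟩
  have ht' : t ∈ Ioo 0 (r / ‖g‖) := ⟨ht, (lt_div_iff₀ hg).mpr htr⟩
  have hray : IsPathConnected ((fun s : ℝ ↦ p - s • g) '' Ioo 0 (r / ‖g‖)) :=
    ((convex_Ioo _ _).isPathConnected ⟨s, hs'⟩).image (by fun_prop)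
  refine (hray.joinedIn _ (mem_image_of_mem _ hs') _ (mem_image_of_mem _ ht')).mono ?_
  rintro _ ⟨u, ⟨hu, hur⟩, rfl⟩
  have hur : u * ‖g‖ < r := (lt_div_iff₀ hg).mp hur
  exact ⟨sub_smul_mem_ball hu.le hur, hU.apply_sub_smul_lt hc hu hur⟩

theorem ApproximatesLinearOn.joinedIn_sub_smul_of_mem
    (hU : ApproximatesLinearOn U (innerSL ℝ g) (ball p r) c) (hc : 3 * c < ‖g‖) {x : E}
    (hx : x ∈ ball p r ∩ {x | U x < U p}) :
    JoinedIn (ball p r ∩ {x | U x < U p}) x (p - (‖x - p‖ / ‖g‖) • g) := by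
  obtain ⟨hxB, hxU : U x < U p⟩ := hx
  have hg : 0 < ‖g‖ := by linarith [c.coe_nonneg]
  have hρ : 0 < ‖x - p‖ := norm_pos_iff.mpr (sub_ne_zero.mpr (ne_of_apply_ne U hxU.ne))
  set ρ := ‖x - p‖
  have hxr : ρ < r := mem_ball_iff_norm.mp hxB
  set m := p - (ρ / ‖g‖) • g
  have hmB : m ∈ ball p r :=
    sub_smul_mem_ball (by positivity) (by rwa [div_mul_cancel₀ _ hg.ne'])
  have hm_inner : ⟪g, m - p⟫ = -(ρ * ‖g‖) := by
    rw [sub_sub_cancel_left, inner_neg_right, real_inner_smul_right, real_inner_self_eq_norm_sq]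
    field_simp
  have hm_norm : ‖m - p‖ = ρ := by
    rw [sub_sub_cancel_left, norm_neg, norm_smul, Real.norm_of_nonneg (by positivity),
      div_mul_cancel₀ _ hg.ne']
  refine JoinedIn.of_segment_subset fun z hz ↦ ⟨(convex_ball p r).segment_subset hxB hmB hz, ?_⟩
  have hzB := (convex_ball p r).segment_subset hxB hmB hz
  rw [segment_eq_image] at hz
  obtain ⟨θ, ⟨hθ₀, hθ₁⟩, rfl⟩ := hz
  dsimp only at hzB ⊢
  rw [mem_ofPred_eq]
  -- Off the cone `⟪g, x - p⟫ < -(‖g‖ - 2c) ‖x - p‖`, `U` does not increase along the segment;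
  -- on it, comparing with `U p` directly works since the segment stays at distance `≤ ‖x - p‖`.
  by_cases hcone : -((‖g‖ - 2 * c) * ρ) ≤ ⟪g, x - p⟫
  · have hzx : (1 - θ) • x + θ • m - x = θ • ((m - p) - (x - p)) := by module
    have h_norm : ‖(1 - θ) • x + θ • m - x‖ ≤ θ * (2 * ρ) := by
      rw [hzx, norm_smul, Real.norm_of_nonneg hθ₀]
      gcongr
      linarith [norm_sub_le (m - p) (x - p)]
    have := hU.sub_le_inner hxB hzB
    rw [hzx, real_inner_smul_right, inner_sub_right, hm_inner, ← hzx] at this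
    nlinarith [mul_le_mul_of_nonneg_left h_norm c.coe_nonneg, mul_le_mul_of_nonneg_left hcone hθ₀]
  · have hzp : (1 - θ) • x + θ • m - p = (1 - θ) • (x - p) + θ • (m - p) := by module
    have h_norm : ‖(1 - θ) • x + θ • m - p‖ ≤ ρ := by
      rw [hzp]
      calc _ ≤ ‖(1 - θ) • (x - p)‖ + ‖θ • (m - p)‖ := norm_add_le _ _
        _ = ρ := by
          rw [norm_smul, norm_smul, Real.norm_of_nonneg hθ₀, Real.norm_of_nonneg (by linarith),
            hm_norm]
          ring
    have := hU.sub_le_inner (mem_ball_self (hρ.trans hxr)) hzB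
    rw [hzp, inner_add_right, real_inner_smul_right, real_inner_smul_right, hm_inner, ← hzp] at this
    nlinarith [mul_le_mul_of_nonneg_left h_norm c.coe_nonneg,
      mul_le_mul_of_nonneg_left (not_le.mp hcone).le (sub_nonneg.mpr hθ₁),
      mul_pos (sub_pos.mpr hc) hρ, mul_nonneg (mul_nonneg c.coe_nonneg hθ₀) hρ.le]

theorem ApproximatesLinearOn.isPathConnected_ball_inter_sublevel
    (hU : ApproximatesLinearOn U (innerSL ℝ g) (ball p r) c) (hc : 3 * c < ‖g‖) (hr : 0 < r) :
    IsPathConnected (ball p r ∩ {x | U x < U p}) := by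
  have hg : 0 < ‖g‖ := by linarith [c.coe_nonneg]
  have hc' : (c : ℝ) < ‖g‖ := by linarith [c.coe_nonneg]
  have hparam : ∀ x ∈ ball p r ∩ {x | U x < U p},
      0 < ‖x - p‖ / ‖g‖ ∧ ‖x - p‖ / ‖g‖ * ‖g‖ < r := by
    rintro x ⟨hxB, hxU : U x < U p⟩
    have hxp : x - p ≠ 0 := sub_ne_zero.mpr (ne_of_apply_ne U hxU.ne)
    rw [div_mul_cancel₀ _ hg.ne']
    exact ⟨by positivity, mem_ball_iff_norm.mp hxB⟩
  have hhalf : r / 2 / ‖g‖ * ‖g‖ < r := by rw [div_mul_cancel₀ _ hg.ne']; linarith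
  refine isPathConnected_iff.mpr ⟨⟨_, sub_smul_mem_ball (by positivity) hhalf,
    hU.apply_sub_smul_lt hc' (by positivity) hhalf⟩, fun x hx y hy ↦ ?_⟩
  obtain ⟨hx₀, hxr⟩ := hparam x hx
  obtain ⟨hy₀, hyr⟩ := hparam y hy
  exact (hU.joinedIn_sub_smul_of_mem hc hx).trans
    ((hU.joinedIn_sub_smul hc' hx₀ hxr hy₀ hyr).trans (hU.joinedIn_sub_smul_of_mem hc hy).symm)

theorem ApproximatesLinearOn.isPathConnected_ball_inter_superlevel
    (hU : ApproximatesLinearOn U (innerSL ℝ g) (ball p r) c) (hc : 3 * c < ‖g‖) (hr : 0 < r) :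
    IsPathConnected (ball p r ∩ {x | U p < U x}) := by
  have hneg : ApproximatesLinearOn (-U) (innerSL ℝ (-g)) (ball p r) c := by
    rw [map_neg]
    exact hU.neg
  simpa using hneg.isPathConnected_ball_inter_sublevel (by rwa [norm_neg]) hr

theorem ApproximatesLinearOn.exists_path_into_sublevel
    (hU : ApproximatesLinearOn U (innerSL ℝ g) (ball p r) c) (hc : c < ‖g‖) (hr : 0 < r) :
    ∃ z : ℝ → E, ContinuousOn z (Icc 0 1) ∧ z 0 = p ∧ (∀ t ∈ Icc (0 : ℝ) 1, z t ∈ ball p r) ∧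
      ∀ t ∈ Ioc (0 : ℝ) 1, U (z t) < U p := by
  have hg : 0 < ‖g‖ := c.coe_nonneg.trans_lt hc
  have hspeed : ∀ t ≤ (1 : ℝ), t * (r / 2 / ‖g‖) * ‖g‖ < r := fun t ht ↦ by
    rw [mul_assoc, div_mul_cancel₀ _ hg.ne']
    nlinarith
  refine ⟨fun t ↦ p - (t * (r / 2 / ‖g‖)) • g, by fun_prop, by simp, fun t ht ↦ ?_, fun t ht ↦ ?_⟩
  · exact sub_smul_mem_ball (by have := ht.1; positivity) (hspeed t ht.2)
  · exact hU.apply_sub_smul_lt hc (by have := ht.1; positivity) (hspeed t ht.2)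

theorem ContDiffAt.exists_approximatesLinearOn_ball [CompleteSpace E] (hU : ContDiffAt ℝ 1 U p)
    (hc : 0 < c) : ∃ r₀ > 0, ApproximatesLinearOn U (innerSL ℝ (gradient U p)) (ball p r₀) c := by
  have hfderiv : fderiv ℝ U p = innerSL ℝ (gradient U p) := by
    ext
    simp [gradient]
  obtain ⟨s, hs, hUs⟩ :=
    (hfderiv ▸ hU.hasStrictFDerivAt one_ne_zero).approximates_deriv_on_nhds (Or.inr hc)
  obtain ⟨r₀, hr₀, hball⟩ := Metric.mem_nhds_iff.mp hs
  exact ⟨r₀, hr₀, hUs.mono_set hball⟩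

end Sublevel

theorem level_set_divides_ball_near_noncritical_point_general
    (d : ℕ) (U : EuclideanSpace ℝ (Fin d) → ℝ)
    (hU : ContDiff ℝ 1 U) (p : EuclideanSpace ℝ (Fin d)) (hp : gradient U p ≠ 0) :
    ∃ r₀ > (0 : ℝ), ∀ r : ℝ, 0 < r → r ≤ r₀ →
      ExactlyTwoComponents
        (Metric.ball p r \ {x | U x = U p})
        (Metric.ball p r ∩ {x | U x < U p})
        (Metric.ball p r ∩ {x | U p < U x}) ∧
      IsConnected ((Metric.ball p r \ {p}) ∩ {y | U y < U p}) ∧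
      ∃ z : ℝ → EuclideanSpace ℝ (Fin d),
        ContinuousOn z (Set.Icc 0 1) ∧ z 0 = p ∧
        (∀ t ∈ Set.Icc (0 : ℝ) 1, z t ∈ Metric.ball p r) ∧
        ∀ t ∈ Set.Ioc (0 : ℝ) 1, U (z t) < U p := by
  have hg : 0 < ‖gradient U p‖ := norm_pos_iff.mpr hp
  obtain ⟨r₀, hr₀, hUr₀⟩ :=
    (hU.contDiffAt (x := p)).exists_approximatesLinearOn_ball (c := ‖gradient U p‖₊ / 4)
      (div_pos (nnnorm_pos.mpr hp) four_pos)
  have hc : 3 * ((‖gradient U p‖₊ / 4 : ℝ≥0) : ℝ) < ‖gradient U p‖ := by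
    push_cast
    linarith
  refine ⟨r₀, hr₀, fun r hr hrr₀ ↦ ?_⟩
  have hUr := hUr₀.mono_set (ball_subset_ball hrr₀)
  have h₁ := hUr.isPathConnected_ball_inter_sublevel hc hr
  have h₂ := hUr.isPathConnected_ball_inter_superlevel hc hr
  refine ⟨?_, ?_, hUr.exists_path_into_sublevel (by push_cast; linarith) hr⟩
  · rw [diff_setOf_eq_eq_union]
    exact exactlyTwoComponents_union (isOpen_ball.inter (isOpen_lt hU.continuous continuous_const))
      (isOpen_ball.inter (isOpen_lt continuous_const hU.continuous))
      (disjoint_left.mpr fun x h₁ h₂ ↦ lt_asymm (α := ℝ) h₁.2 h₂.2) h₁.isConnected h₂.isConnected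
  · rw [sdiff_inter_right_comm, sdiff_singleton_eq_self fun h ↦ lt_irrefl (α := ℝ) _ h.2]
    exact h₁.isConnected

/-- Let `U : ℝ^d → ℝ` be `C¹` and let `p` be a point with `∇U(p) ≠ 0`.  For all
sufficiently small `r > 0`: the set `B(p, r) ∖ {U = U p}` has exactly two connected components,
namely `B(p, r) ∩ {U < U p}` and `B(p, r) ∩ {U > U p}`; in particular the set
`A(p, r) = (B(p, r) ∖ {p}) ∩ {U < U p}` is connected; moreover there is a continuous path
`z : [0, 1] → B(p, r)` with `z 0 = p` and `U (z t) < U p` for `t ∈ (0, 1]`. -/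
theorem level_set_divides_ball_near_noncritical_point
    (d : ℕ) (hd : 1 ≤ d) (U : EuclideanSpace ℝ (Fin d) → ℝ)
    (hU : ContDiff ℝ 1 U) (p : EuclideanSpace ℝ (Fin d)) (hp : gradient U p ≠ 0) :
    ∃ r₀ > (0 : ℝ), ∀ r : ℝ, 0 < r → r ≤ r₀ →
      ExactlyTwoComponents
        (Metric.ball p r \ {x | U x = U p})
        (Metric.ball p r ∩ {x | U x < U p})
        (Metric.ball p r ∩ {x | U p < U x}) ∧
      IsConnected ((Metric.ball p r \ {p}) ∩ {y | U y < U p}) ∧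
      ∃ z : ℝ → EuclideanSpace ℝ (Fin d),
        ContinuousOn z (Set.Icc 0 1) ∧ z 0 = p ∧
        (∀ t ∈ Set.Icc (0 : ℝ) 1, z t ∈ Metric.ball p r) ∧
        ∀ t ∈ Set.Ioc (0 : ℝ) 1, U (z t) < U p :=
  level_set_divides_ball_near_noncritical_point_general d U hU p hp
end

section
/- Let U : ℝ^d → ℝ be smooth and let σ be a critical point of U whose Hessian ∇²U(σ) is invertible and has exactly one negative eigenvalue (counted with multiplicity). Then for all sufficiently small r > 0 the set A(σ,r) has exactly two connected components. -/
open Set InnerProductSpace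

set_option maxHeartbeats 4000000

/-- The Hessian matrix `∇²U(x)` of `U : ℝ^d → ℝ` at `x`, whose `(i, j)` entry is the second
derivative of `U` at `x` in the directions of the `i`-th and `j`-th coordinate vectors. -/
noncomputable def hessianMatrix {d : ℕ} (U : EuclideanSpace ℝ (Fin d) → ℝ)
    (x : EuclideanSpace ℝ (Fin d)) : Matrix (Fin d) (Fin d) ℝ :=
  fun i j =>
    iteratedFDeriv ℝ 2 U x ![EuclideanSpace.single i (1 : ℝ), EuclideanSpace.single j (1 : ℝ)]

lemma comp_eq_of_sides {X : Type*} [TopologicalSpace X]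
    {T : Set X} {f : X → ℝ} (hf : Continuous f) (hT : ∀ x ∈ T, f x ≠ 0)
    (hS : IsPreconnected (T ∩ {x | 0 < f x})) {x : X} (hx : x ∈ T ∩ {x | 0 < f x}) :
    connectedComponentIn T x = T ∩ {x | 0 < f x} := by
  apply subset_antisymm
  · intro y hy
    have hyT : y ∈ T := connectedComponentIn_subset T x hy
    refine ⟨hyT, ?_⟩
    by_contra hneg
    have h2 : f y < 0 := lt_of_le_of_ne (not_lt.1 hneg) (hT y hyT)
    obtain ⟨z, hz2, hz3⟩ :=
      (isPreconnected_connectedComponentIn (x := x) (F := T)) {w | 0 < f w} {w | f w < 0}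
        (isOpen_lt continuous_const hf) (isOpen_lt hf continuous_const)
        (fun w hw => by
          rcases Ne.lt_or_gt (hT w (connectedComponentIn_subset T x hw)) with h | h
          · exact Or.inr h
          · exact Or.inl h)
        ⟨x, mem_connectedComponentIn hx.1, hx.2⟩ ⟨y, hy, h2⟩
    simp only [mem_setOf_eq, mem_inter_iff] at hz2 hz3
    exact absurd hz3.2 (not_lt.2 (le_of_lt hz3.1))
  · exact hS.subset_connectedComponentIn hx (inter_subset_left)

variable {E : Type*} [NormedAddCommGroup E] [InnerProductSpace ℝ E] [CompleteSpace E]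

local notation "⟪" x ", " y "⟫" => @inner ℝ _ _ x y

lemma inner_gradient_eq (U : E → ℝ) (z w : E) : ⟪gradient U z, w⟫ = fderiv ℝ U z w := by
  rw [gradient, toDual_symm_apply]

lemma taylor_bound (U : E → ℝ) (σ : E) (hUdiff : Differentiable ℝ U) (L : E → E)
    (hLs : ∀ (c : ℝ) (x : E), L (c • x) = c • L x)
    (ε ρ : ℝ) (hε : 0 ≤ ε)
    (hgrad : ∀ z : E, ‖z - σ‖ < ρ → ‖gradient U z - L (z - σ)‖ ≤ ε * ‖z - σ‖)
    (h : E) (hh : ‖h‖ < ρ) (hh0 : 0 ≤ ‖h‖) :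
    |U (σ + h) - U σ - ⟪L h, h⟫ / 2| ≤ ε * ‖h‖ ^ 2 := by
  set φ : ℝ → ℝ := fun s => U (σ + s • h) - s ^ 2 / 2 * ⟪L h, h⟫ with hφ
  have hderiv : ∀ s : ℝ, HasDerivAt φ (⟪gradient U (σ + s • h) - L (s • h), h⟫) s := by
    intro s
    have h1 : HasDerivAt (fun s : ℝ => σ + s • h) h s := by
      simpa using ((hasDerivAt_id s).smul_const h).const_add σ
    have h2 : HasDerivAt (fun s : ℝ => U (σ + s • h)) (fderiv ℝ U (σ + s • h) h) s :=
      (hUdiff (σ + s • h)).hasFDerivAt.comp_hasDerivAt s h1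
    have h3 : HasDerivAt (fun s : ℝ => s ^ 2 / 2 * ⟪L h, h⟫) (s * ⟪L h, h⟫) s := by
      have := ((hasDerivAt_pow 2 s).div_const 2).mul_const (⟪L h, h⟫ : ℝ)
      simpa using this
    have h4 := h2.sub h3
    refine h4.congr_deriv ?_
    rw [inner_sub_left, inner_gradient_eq]
    have : ⟪L (s • h), h⟫ = s * ⟪L h, h⟫ := by
      rw [hLs, real_inner_smul_left]
    rw [this]
  have hbound : ∀ s ∈ Icc (0:ℝ) 1, ‖⟪gradient U (σ + s • h) - L (s • h), h⟫‖ ≤ ε * ‖h‖ ^ 2 := by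
    intro s hs
    have hsh : ‖s • h‖ < ρ := by
      rw [norm_smul, Real.norm_eq_abs, abs_of_nonneg hs.1]
      nlinarith [hs.1, hs.2, hh, hh0]
    have := hgrad (σ + s • h) (by simpa using hsh)
    rw [add_sub_cancel_left] at this
    calc ‖⟪gradient U (σ + s • h) - L (s • h), h⟫‖
        ≤ ‖gradient U (σ + s • h) - L (s • h)‖ * ‖h‖ := norm_inner_le_norm _ _
      _ ≤ ε * ‖s • h‖ * ‖h‖ := by
          apply mul_le_mul_of_nonneg_right this hh0
      _ ≤ ε * ‖h‖ ^ 2 := by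
          rw [norm_smul, Real.norm_eq_abs, abs_of_nonneg hs.1]
          nlinarith [mul_nonneg (mul_nonneg hε (mul_nonneg hh0 hh0)) (sub_nonneg.2 hs.2)]
  have key := Convex.norm_image_sub_le_of_norm_hasDerivWithin_le
    (f := φ) (f' := fun s => ⟪gradient U (σ + s • h) - L (s • h), h⟫)
    (fun s hs => (hderiv s).hasDerivWithinAt) hbound (convex_Icc 0 1)
    (left_mem_Icc.2 zero_le_one) (right_mem_Icc.2 zero_le_one)
  have : φ 1 - φ 0 = U (σ + h) - U σ - ⟪L h, h⟫ / 2 := by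
    simp [hφ]
    ring
  rw [this] at key
  simpa using key

lemma inner_gradient_eq' (U : E → ℝ) (z w : E) : ⟪gradient U z, w⟫ = fderiv ℝ U z w := by
  rw [gradient, toDual_symm_apply]

lemma side_core
    (U : E → ℝ) (σ : E) (e : E) (he : ‖e‖ = 1)
    (hUdiff : Differentiable ℝ U)
    (L : E → E) (R : E → E → ℝ)
    (lam m M ε ρ r : ℝ)
    (hlam : 0 < lam) (hm : 0 < m) (hmM : m ≤ M) (hε : 0 < ε)
    (hε2 : 4 * ε ≤ m) (hε3 : 8 * ε ≤ lam)
    (hεB : ε + (ε + M / 2) * (ε ^ 2 * ((3 * m + 2 * lam) / m) / m ^ 2) < lam / 2)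
    (hr : 0 < r) (hrρ : r ≤ ρ)
    (hL : ∀ h k : E, ⟪L h, k⟫ = -lam * (⟪e, h⟫ * ⟪e, k⟫) + R h k)
    (hRlin : ∀ (t s : ℝ) (a b k : E), R (t • a + s • b) k = t * R a k + s * R b k)
    (hRe : ∀ k, R e k = 0)
    (hRlow : ∀ h, m * ‖h - ⟪e, h⟫ • e‖ ^ 2 ≤ R h h)
    (hRhigh : ∀ h, R h h ≤ M * ‖h - ⟪e, h⟫ • e‖ ^ 2)
    (hgrad : ∀ z : E, ‖z - σ‖ < ρ → ‖gradient U z - L (z - σ)‖ ≤ ε * ‖z - σ‖)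
    (hTay : ∀ h : E, ‖h‖ < ρ →
      |U (σ + h) - U σ - (-lam * ⟪e, h⟫ ^ 2 + R h h) / 2| ≤ ε * ‖h‖ ^ 2) :
    (((Metric.ball σ r \ {σ}) ∩ {y | U y < U σ}) ∩ {y | 0 < ⟪e, y - σ⟫}).Nonempty ∧
    IsPreconnected (((Metric.ball σ r \ {σ}) ∩ {y | U y < U σ}) ∩ {y | 0 < ⟪e, y - σ⟫}) ∧
    ∀ y ∈ (Metric.ball σ r \ {σ}) ∩ {y | U y < U σ}, ⟪e, y - σ⟫ ≠ 0 := by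
  set A : Set E := (Metric.ball σ r \ {σ}) ∩ {y | U y < U σ} with hA
  set S : Set E := A ∩ {y | 0 < ⟪e, y - σ⟫} with hS
  set D : ℝ := (3 * m + 2 * lam) / m with hD
  set B2 : ℝ := ε ^ 2 * D / m ^ 2 with hB2
  have hDpos : 0 < D := by positivity
  have hB2pos : 0 < B2 := by positivity
  have hee : ⟪e, e⟫ = 1 := by
    rw [real_inner_self_eq_norm_mul_norm, he]; norm_num
  have hmemA : ∀ y : E, y ∈ A ↔ (‖y - σ‖ < r ∧ y ≠ σ ∧ U y < U σ) := by
    intro y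
    simp [hA, Metric.mem_ball, dist_eq_norm, and_assoc]
  have hperp0 : ∀ h : E, ⟪e, h - ⟪e, h⟫ • e⟫ = 0 := by
    intro h
    simp [inner_sub_right, real_inner_smul_right, hee, he]
  have hpyth : ∀ h : E, ‖h‖ ^ 2 = ⟪e, h⟫ ^ 2 + ‖h - ⟪e, h⟫ • e‖ ^ 2 := by
    intro h
    have h1 : h = ⟪e, h⟫ • e + (h - ⟪e, h⟫ • e) := by abel
    have h2 : ⟪⟪e, h⟫ • e, h - ⟪e, h⟫ • e⟫ = 0 := by
      rw [real_inner_smul_left, hperp0 h, mul_zero]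
    calc ‖h‖ ^ 2 = ‖⟪e, h⟫ • e + (h - ⟪e, h⟫ • e)‖ ^ 2 := by rw [← h1]
      _ = ‖⟪e, h⟫ • e‖ ^ 2 + 2 * ⟪⟪e, h⟫ • e, h - ⟪e, h⟫ • e⟫ + ‖h - ⟪e, h⟫ • e‖ ^ 2 :=
          norm_add_sq_real _ _
      _ = ⟪e, h⟫ ^ 2 + ‖h - ⟪e, h⟫ • e‖ ^ 2 := by
          rw [h2, norm_smul, he, mul_one, Real.norm_eq_abs, sq_abs]; ring
  -- cone bound
  have hcone : ∀ y ∈ A, ‖y - σ‖ ^ 2 ≤ D * ⟪e, y - σ⟫ ^ 2 := by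
    intro y hy
    obtain ⟨h1r, h1ne, h1U⟩ := (hmemA y).1 hy
    have hyσ : σ + (y - σ) = y := by abel
    have hhρ : ‖y - σ‖ < ρ := lt_of_lt_of_le h1r hrρ
    have htay := (abs_le.1 (hTay (y - σ) hhρ)).1
    rw [hyσ] at htay
    have hlow := hRlow (y - σ)
    have hp := hpyth (y - σ)
    rw [hD, div_mul_eq_mul_div, le_div_iff₀ hm]
    nlinarith [sq_nonneg (⟪e, y - σ⟫), norm_nonneg (y - σ - ⟪e, y - σ⟫ • e), sq_nonneg ‖y - σ - ⟪e, y - σ⟫ • e‖]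
  have hne0 : ∀ y ∈ A, ⟪e, y - σ⟫ ≠ 0 := by
    intro y hy hzero
    have h1 := hcone y hy
    rw [hzero] at h1
    obtain ⟨_, h2, _⟩ := (hmemA y).1 hy
    have h3 : 0 < ‖y - σ‖ := norm_pos_iff.2 (sub_ne_zero.2 h2)
    nlinarith
  -- the sufficient cone K is inside S
  have hKmem : ∀ h : E, 0 < ⟪e, h⟫ → ‖h - ⟪e, h⟫ • e‖ ^ 2 ≤ B2 * ⟪e, h⟫ ^ 2 → ‖h‖ < r →
      σ + h ∈ S := by
    intro h ht hw hr'
    have hhρ : ‖h‖ < ρ := lt_of_lt_of_le hr' hrρ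
    have htay := (abs_le.1 (hTay h hhρ)).2
    have hhigh := hRhigh h
    have hp := hpyth h
    have hMpos : (0:ℝ) < M := lt_of_lt_of_le hm hmM
    have hUneg : U (σ + h) < U σ := by
      nlinarith [mul_le_mul_of_nonneg_left hw (le_of_lt hMpos),
        mul_le_mul_of_nonneg_left hw (le_of_lt hε),
        mul_pos (sub_pos.2 hεB) (pow_pos ht 2)]
    have hne : σ + h ≠ σ := by
      intro hcontra
      have : h = 0 := by
        have := congrArg (fun z => z - σ) hcontra
        simpa using this
      rw [this] at ht; simp at ht
    refine ⟨(hmemA _).2 ⟨by simpa using hr', hne, hUneg⟩, ?_⟩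
    simpa using ht
  -- the base point
  have hstar : σ + (r / 2) • e ∈ S := by
    apply hKmem
    · rw [real_inner_smul_right, hee, mul_one]; positivity
    · have : (r / 2) • e - ⟪e, (r / 2) • e⟫ • e = 0 := by
        rw [real_inner_smul_right, hee, mul_one]; abel
      rw [this, norm_zero]
      have : (0:ℝ) ≤ B2 * ⟪e, (r / 2) • e⟫ ^ 2 := mul_nonneg (le_of_lt hB2pos) (sq_nonneg _)
      simpa using this
    · rw [norm_smul, he, mul_one, Real.norm_eq_abs, abs_of_pos (by positivity)]
      linarith
  -- joining within the cone K
  have hjoinK : ∀ h₁ : E, 0 < ⟪e, h₁⟫ → ‖h₁ - ⟪e, h₁⟫ • e‖ ^ 2 ≤ B2 * ⟪e, h₁⟫ ^ 2 → ‖h₁‖ < r →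
      JoinedIn S (σ + h₁) (σ + (r / 2) • e) := by
    intro h₁ ht hw hr'
    have hmem : ∀ s : ℝ, s ∈ Icc (0:ℝ) 1 → σ + ((1 - s) • h₁ + (s * (r / 2)) • e) ∈ S := by
      intro s hs
      have hinner : ⟪e, (1 - s) • h₁ + (s * (r / 2)) • e⟫ = (1 - s) * ⟪e, h₁⟫ + s * (r / 2) := by
        rw [inner_add_right, real_inner_smul_right, real_inner_smul_right, hee, mul_one]
      have htpos : 0 < (1 - s) * ⟪e, h₁⟫ + s * (r / 2) := by
        rcases eq_or_lt_of_le hs.2 with rfl | hlt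
        · simpa using by positivity
        · have : 0 < (1 - s) * ⟪e, h₁⟫ := mul_pos (by linarith) ht
          nlinarith [hs.1, hr]
      apply hKmem
      · rw [hinner]; exact htpos
      · rw [hinner]
        have hperp : ((1 - s) • h₁ + (s * (r / 2)) • e) - ((1 - s) * ⟪e, h₁⟫ + s * (r / 2)) • e
            = (1 - s) • (h₁ - ⟪e, h₁⟫ • e) := by
          module
        rw [hperp, norm_smul, Real.norm_eq_abs, abs_of_nonneg (by linarith [hs.2] : (0:ℝ) ≤ 1 - s)]
        have h1 : ((1 - s) * ‖h₁ - ⟪e, h₁⟫ • e‖) ^ 2 ≤ (1 - s) ^ 2 * (B2 * ⟪e, h₁⟫ ^ 2) := by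
          rw [mul_pow]
          exact mul_le_mul_of_nonneg_left hw (sq_nonneg _)
        have h2 : (1 - s) ^ 2 * (B2 * ⟪e, h₁⟫ ^ 2) ≤ B2 * ((1 - s) * ⟪e, h₁⟫ + s * (r / 2)) ^ 2 := by
          have ha : 0 ≤ (1 - s) * ⟪e, h₁⟫ := mul_nonneg (by linarith [hs.2]) (le_of_lt ht)
          have hb : 0 ≤ s * (r / 2) := mul_nonneg hs.1 (by positivity)
          nlinarith [mul_nonneg (le_of_lt hB2pos) (mul_nonneg ha hb),
            mul_nonneg (le_of_lt hB2pos) (sq_nonneg (s * (r / 2)))]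
        linarith
      · have hna : ‖(1 - s) • h₁ + (s * (r / 2)) • e‖ ≤ (1 - s) * ‖h₁‖ + s * (r / 2) := by
          calc ‖(1 - s) • h₁ + (s * (r / 2)) • e‖ ≤ ‖(1 - s) • h₁‖ + ‖(s * (r / 2)) • e‖ :=
                norm_add_le _ _
            _ = (1 - s) * ‖h₁‖ + s * (r / 2) := by
                rw [norm_smul, norm_smul, he, mul_one, Real.norm_eq_abs, Real.norm_eq_abs,
                  abs_of_nonneg (by linarith [hs.2] : (0:ℝ) ≤ 1 - s),
                  abs_of_nonneg (mul_nonneg hs.1 (by positivity))]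
        have : (1 - s) * ‖h₁‖ + s * (r / 2) < r := by
          nlinarith [hs.1, hs.2, mul_nonneg hs.1 (le_of_lt hr), norm_nonneg h₁,
            mul_le_mul_of_nonneg_left (le_of_lt hr') (by linarith [hs.2] : (0:ℝ) ≤ 1 - s)]
        linarith
    refine ⟨⟨⟨fun s => σ + ((1 - (s:ℝ)) • h₁ + ((s:ℝ) * (r / 2)) • e), ?_⟩, ?_, ?_⟩, ?_⟩
    · fun_prop
    · simp
    · simp
    · intro s
      exact hmem (s : ℝ) s.2
  -- piece 1: flow towards the axis
  have hpiece1 : ∀ y ∈ S, ∃ h₁ : E,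
      (0 < ⟪e, h₁⟫ ∧ ‖h₁ - ⟪e, h₁⟫ • e‖ ^ 2 ≤ B2 * ⟪e, h₁⟫ ^ 2 ∧ ‖h₁‖ < r) ∧
      JoinedIn S y (σ + h₁) := by
    intro y hy
    have hyA : y ∈ A := hy.1
    have hyt : 0 < ⟪e, y - σ⟫ := hy.2
    obtain ⟨h1r, h1ne, h1U⟩ := (hmemA y).1 hyA
    have hyσ : σ + (y - σ) = y := by abel
    set t : ℝ := ⟪e, y - σ⟫ with htdef
    set q : E := (y - σ) - t • e with hqdef
    have heq0 : ⟪e, q⟫ = 0 := hperp0 (y - σ)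
    have hpy : ‖y - σ‖ ^ 2 = t ^ 2 + ‖q‖ ^ 2 := hpyth (y - σ)
    have hn : 0 < ‖y - σ‖ := norm_pos_iff.2 (sub_ne_zero.2 h1ne)
    have hconey : ‖y - σ‖ ^ 2 ≤ D * t ^ 2 := hcone y hyA
    clear_value t q
    by_cases hcase : m * ‖q‖ ≤ ε * ‖y - σ‖
    · -- already in the cone K
      refine ⟨y - σ, ⟨htdef ▸ hyt, ?_, h1r⟩, by rw [hyσ]; exact JoinedIn.refl hy⟩
      have hgoal : ‖q‖ ^ 2 * m ^ 2 ≤ ε ^ 2 * D * t ^ 2 := by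
        nlinarith [mul_le_mul_of_nonneg_left hconey (le_of_lt (mul_pos hε hε)),
          mul_self_nonneg (m * ‖q‖), norm_nonneg q, hε.le, hn.le,
          mul_le_mul hcase hcase (mul_nonneg hm.le (norm_nonneg q)) (mul_nonneg hε.le hn.le)]
      rw [hB2, div_mul_eq_mul_div, le_div_iff₀ (by positivity : (0:ℝ) < m ^ 2)]
      calc ‖y - σ - ⟪e, y - σ⟫ • e‖ ^ 2 * m ^ 2 = ‖q‖ ^ 2 * m ^ 2 := by rw [hqdef, htdef]
        _ ≤ ε ^ 2 * D * t ^ 2 := hgoal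
        _ = ε ^ 2 * D * ⟪e, y - σ⟫ ^ 2 := by rw [← htdef]
    · -- genuine flow
      push_neg at hcase
      have hW : 0 < ‖q‖ := by
        rcases (norm_nonneg q).lt_or_eq with h | h
        · exact h
        · exfalso; rw [← h] at hcase; simp at hcase; nlinarith
      set θ : ℝ := ε * ‖y - σ‖ / (m * ‖q‖) with hθdef
      have hmW : 0 < m * ‖q‖ := mul_pos hm hW
      have hθpos : 0 < θ := by rw [hθdef]; positivity
      have hθ1 : θ < 1 := by rw [hθdef]; exact (div_lt_one hmW).2 hcase
      have hθmW : θ * (m * ‖q‖) = ε * ‖y - σ‖ := by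
        rw [hθdef]; exact div_mul_cancel₀ _ (ne_of_gt hmW)
      clear_value θ
      set g : ℝ → E := fun s => σ + t • e + (1 - s * (1 - θ)) • q with hgdef
      clear_value g
      have hgsub : ∀ s : ℝ, g s - σ = t • e + (1 - s * (1 - θ)) • q := by
        intro s; simp only [hgdef]; abel
      have hg0 : g 0 = y := by
        simp only [hgdef, zero_mul, sub_zero, one_smul]
        rw [hqdef]; abel
      have hg1 : g 1 = σ + (t • e + θ • q) := by
        simp only [hgdef, one_mul]
        rw [show (1 : ℝ) - (1 - θ) = θ by ring]; abel
      have hgcont : Continuous g := by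
        rw [hgdef]; fun_prop
      -- coordinates along the path
      have hcoord : ∀ s : ℝ, s ∈ Icc (0:ℝ) 1 →
          ⟪e, g s - σ⟫ = t ∧ ‖g s - σ‖ ^ 2 = t ^ 2 + (1 - s * (1 - θ)) ^ 2 * ‖q‖ ^ 2 := by
        intro s hs
        constructor
        · rw [hgsub, inner_add_right, real_inner_smul_right, real_inner_smul_right, hee, heq0]
          ring
        · rw [hgsub]
          have hip : ⟪t • e, (1 - s * (1 - θ)) • q⟫ = 0 := by
            rw [real_inner_smul_left, real_inner_smul_right, heq0]; ring
          calc ‖t • e + (1 - s * (1 - θ)) • q‖ ^ 2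
              = ‖t • e‖ ^ 2 + 2 * ⟪t • e, (1 - s * (1 - θ)) • q⟫ + ‖(1 - s * (1 - θ)) • q‖ ^ 2 :=
                norm_add_sq_real _ _
            _ = t ^ 2 + (1 - s * (1 - θ)) ^ 2 * ‖q‖ ^ 2 := by
                rw [hip, norm_smul, norm_smul, he, mul_one]
                simp only [Real.norm_eq_abs, mul_pow, sq_abs]
                ring
      have hcbound : ∀ s : ℝ, s ∈ Icc (0:ℝ) 1 → θ ≤ 1 - s * (1 - θ) ∧ 1 - s * (1 - θ) ≤ 1 := by
        intro s hs
        constructor <;> nlinarith [hs.1, hs.2, hθpos, hθ1]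
      have hnorm_le : ∀ s : ℝ, s ∈ Icc (0:ℝ) 1 → ‖g s - σ‖ ≤ ‖y - σ‖ := by
        intro s hs
        have h1 := (hcoord s hs).2
        have h2 := hcbound s hs
        have h3 : ‖g s - σ‖ ^ 2 ≤ ‖y - σ‖ ^ 2 := by
          rw [h1, hpy]
          nlinarith [sq_nonneg ‖q‖, h2.1, h2.2, hθpos,
            mul_nonneg (sub_nonneg.2 h2.2)
              (show (0:ℝ) ≤ 1 + (1 - s * (1 - θ)) by linarith [h2.1, hθpos.le])]
        nlinarith [norm_nonneg (g s - σ), norm_nonneg (y - σ)]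
      -- derivative of U along the path
      have hψd : ∀ s : ℝ, HasDerivAt (fun s => U (g s)) (⟪gradient U (g s), (-(1 - θ)) • q⟫) s := by
        intro s
        have h1 : HasDerivAt (fun s : ℝ => 1 - s * (1 - θ)) (-(1 - θ)) s := by
          simpa using ((hasDerivAt_id s).mul_const (1 - θ)).const_sub 1
        have h2 : HasDerivAt g ((-(1 - θ)) • q) s := by
          rw [hgdef]
          simpa using (h1.smul_const q).const_add (σ + t • e)
        have h3 := (hUdiff (g s)).hasFDerivAt.comp_hasDerivAt s h2
        exact h3.congr_deriv (inner_gradient_eq' _ _ _).symm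
      have hder_nonpos : ∀ s : ℝ, s ∈ Icc (0:ℝ) 1 → ⟪gradient U (g s), (-(1 - θ)) • q⟫ ≤ 0 := by
        intro s hs
        have hc := hcbound s hs
        have hzρ : ‖g s - σ‖ < ρ := lt_of_le_of_lt (hnorm_le s hs) (lt_of_lt_of_le h1r hrρ)
        have hgb := hgrad (g s) hzρ
        have hLq : ⟪L (g s - σ), q⟫ = (1 - s * (1 - θ)) * R q q := by
          rw [hL, (hcoord s hs).1, heq0, hgsub, hRlin t (1 - s * (1 - θ)) e q q, hRe]
          ring
        have hRq : m * ‖q‖ ^ 2 ≤ R q q := by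
          have := hRlow q
          rwa [heq0, zero_smul, sub_zero] at this
        have hCS : |⟪gradient U (g s) - L (g s - σ), q⟫| ≤
            ‖gradient U (g s) - L (g s - σ)‖ * ‖q‖ := abs_real_inner_le_norm _ _
        have hinner_pos : 0 ≤ ⟪gradient U (g s), q⟫ := by
          have expand : ⟪gradient U (g s), q⟫ =
              ⟪L (g s - σ), q⟫ + ⟪gradient U (g s) - L (g s - σ), q⟫ := by
            rw [inner_sub_left]; ring
          rw [expand, hLq]
          have herr : -(ε * ‖y - σ‖ * ‖q‖) ≤ ⟪gradient U (g s) - L (g s - σ), q⟫ := by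
            have h5 : ‖gradient U (g s) - L (g s - σ)‖ * ‖q‖ ≤ ε * ‖y - σ‖ * ‖q‖ := by
              apply mul_le_mul_of_nonneg_right _ (norm_nonneg q)
              exact le_trans hgb (mul_le_mul_of_nonneg_left (hnorm_le s hs) hε.le)
            have h6 := (abs_le.1 (hCS.trans h5)).1
            linarith
          have hRqc : θ * (m * ‖q‖ ^ 2) ≤ (1 - s * (1 - θ)) * R q q := by
            have h6 : θ * (m * ‖q‖ ^ 2) ≤ (1 - s * (1 - θ)) * (m * ‖q‖ ^ 2) :=
              mul_le_mul_of_nonneg_right hc.1 (by positivity)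
            exact le_trans h6 (mul_le_mul_of_nonneg_left hRq (by linarith [hc.1, hθpos]))
          have h7 : θ * (m * ‖q‖ ^ 2) = ε * ‖y - σ‖ * ‖q‖ := by
            calc θ * (m * ‖q‖ ^ 2) = θ * (m * ‖q‖) * ‖q‖ := by ring
              _ = ε * ‖y - σ‖ * ‖q‖ := by rw [hθmW]
          linarith
        rw [inner_smul_right]
        nlinarith [hθ1, hinner_pos]
      -- U is non-increasing along the path
      have hant : AntitoneOn (fun s => U (g s)) (Icc (0:ℝ) 1) := by
        apply antitoneOn_of_hasDerivWithinAt_nonpos (convex_Icc (0:ℝ) 1)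
          (hUdiff.continuous.comp hgcont).continuousOn
          (f' := fun s => ⟪gradient U (g s), (-(1 - θ)) • q⟫)
          (fun x hx => (hψd x).hasDerivWithinAt)
        intro x hx
        rw [interior_Icc] at hx
        exact hder_nonpos x ⟨hx.1.le, hx.2.le⟩
      -- membership of the whole path
      have hgmem : ∀ s : ℝ, s ∈ Icc (0:ℝ) 1 → g s ∈ S := by
        intro s hs
        have hcoords := hcoord s hs
        have hgneσ : g s ≠ σ := by
          intro hcontra
          have := hcoords.1
          rw [hcontra, sub_self, inner_zero_right] at this
          rw [← this] at hyt
          exact lt_irrefl 0 hyt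
        have hUle : U (g s) ≤ U y := by
          have := hant (left_mem_Icc.2 zero_le_one) hs hs.1
          simpa [hg0] using this
        refine ⟨(hmemA _).2 ⟨lt_of_le_of_lt (hnorm_le s hs) h1r, hgneσ, lt_of_le_of_lt hUle h1U⟩, ?_⟩
        show 0 < ⟪e, g s - σ⟫
        rw [hcoords.1]; exact hyt
      -- conclusion of piece 1
      refine ⟨t • e + θ • q, ⟨?_, ?_, ?_⟩, ?_⟩
      · rw [inner_add_right, real_inner_smul_right, real_inner_smul_right, hee, heq0]
        simpa using hyt
      · have hiq : ⟪e, t • e + θ • q⟫ = t := by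
          rw [inner_add_right, real_inner_smul_right, real_inner_smul_right, hee, heq0]; ring
        rw [hiq]
        have hperpq : t • e + θ • q - t • e = θ • q := by abel
        rw [hperpq, norm_smul, Real.norm_eq_abs, abs_of_pos hθpos, mul_pow]
        have hθsq : θ ^ 2 * ‖q‖ ^ 2 = ε ^ 2 * ‖y - σ‖ ^ 2 / m ^ 2 := by
          rw [hθdef]
          field_simp
        rw [hθsq, hB2]
        rw [div_mul_eq_mul_div, div_le_div_iff₀ (by positivity) (by positivity)]
        nlinarith [mul_le_mul_of_nonneg_left hconey (le_of_lt (mul_pos hε hε)),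
          sq_nonneg m, hm]
      · have h8 : ‖t • e + θ • q‖ ^ 2 = t ^ 2 + θ ^ 2 * ‖q‖ ^ 2 := by
          have hip : ⟪t • e, θ • q⟫ = 0 := by
            rw [real_inner_smul_left, real_inner_smul_right, heq0]; ring
          calc ‖t • e + θ • q‖ ^ 2
              = ‖t • e‖ ^ 2 + 2 * ⟪t • e, θ • q⟫ + ‖θ • q‖ ^ 2 := norm_add_sq_real _ _
            _ = t ^ 2 + θ ^ 2 * ‖q‖ ^ 2 := by
                rw [hip, norm_smul, norm_smul, he, mul_one]
                simp only [Real.norm_eq_abs, mul_pow, sq_abs]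
                ring
        have h9 : ‖t • e + θ • q‖ ^ 2 < r ^ 2 := by
          rw [h8]
          have : t ^ 2 + θ ^ 2 * ‖q‖ ^ 2 ≤ ‖y - σ‖ ^ 2 := by
            rw [hpy]
            nlinarith [mul_nonneg (mul_nonneg (sub_nonneg.2 hθ1.le)
              (show (0:ℝ) ≤ 1 + θ by linarith [hθpos])) (sq_nonneg ‖q‖)]
          nlinarith [hn, h1r]
        exact lt_of_pow_lt_pow_left₀ 2 hr.le h9
      · refine ⟨⟨⟨fun s => g s, hgcont.comp continuous_subtype_val⟩, ?_, ?_⟩, ?_⟩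
        · simpa using hg0
        · simpa using hg1
        · intro s
          exact hgmem (s : ℝ) s.2
  -- final assembly
  refine ⟨⟨_, hstar⟩, ?_, hne0⟩
  have hpc : IsPathConnected S := by
    refine ⟨σ + (r / 2) • e, hstar, ?_⟩
    intro y hy
    obtain ⟨h₁, ⟨c1, c2, c3⟩, hj⟩ := hpiece1 y hy
    exact ((hj.trans (hjoinK h₁ c1 c2 c3)).symm)
  exact hpc.isConnected.isPreconnected

lemma hess_expand {d : ℕ} (U : EuclideanSpace ℝ (Fin d) → ℝ) (σ : EuclideanSpace ℝ (Fin d))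
    (hherm : (hessianMatrix U σ).IsHermitian) (h k : EuclideanSpace ℝ (Fin d)) :
    fderiv ℝ (fderiv ℝ U) σ h k =
      ∑ i, hherm.eigenvalues i *
        (⟪(hherm.eigenvectorBasis i : EuclideanSpace ℝ (Fin d)), h⟫ *
         ⟪(hherm.eigenvectorBasis i : EuclideanSpace ℝ (Fin d)), k⟫) := by
  set f2 := fderiv ℝ (fderiv ℝ U) σ with hf2
  set A := hessianMatrix U σ with hAdef
  set μ := hherm.eigenvalues with hμ
  set v := hherm.eigenvectorBasis with hv
  have hAij : ∀ i j, A i j = f2 (EuclideanSpace.single i 1) (EuclideanSpace.single j 1) := by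
    intro i j
    rw [hAdef]
    show iteratedFDeriv ℝ 2 U σ ![_, _] = _
    rw [iteratedFDeriv_two_apply]
    simp
    rfl
  have hx : ∀ x : EuclideanSpace ℝ (Fin d), x = ∑ i, x i • EuclideanSpace.single i (1:ℝ) := by
    intro x
    have := ((EuclideanSpace.basisFun (Fin d) ℝ).sum_repr x).symm
    simpa [EuclideanSpace.basisFun_repr, EuclideanSpace.basisFun_apply] using this
  have hexp1 : ∀ (x : EuclideanSpace ℝ (Fin d)) (w : EuclideanSpace ℝ (Fin d)),
      f2 x w = ∑ i, x i * (f2 (EuclideanSpace.single i 1) w) := by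
    intro x w
    conv_lhs => rw [hx x]
    rw [map_sum]
    simp [ContinuousLinearMap.sum_apply]
  have hexp2 : ∀ (i : Fin d) (w : EuclideanSpace ℝ (Fin d)),
      f2 (EuclideanSpace.single i 1) w = ∑ j, w j * A i j := by
    intro i w
    conv_lhs => rw [hx w]
    rw [map_sum]
    refine Finset.sum_congr rfl fun j _ => ?_
    rw [map_smul, smul_eq_mul, hAij]
  have hinner : ∀ x y : EuclideanSpace ℝ (Fin d), ⟪x, y⟫ = ∑ i, x i * y i := by
    intro x y
    simp [PiLp.inner_apply, RCLike.inner_apply, conj_trivial]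
    exact Finset.sum_congr rfl fun i _ => mul_comm _ _
  have heig : ∀ j, ∀ i, (∑ k, (v j : EuclideanSpace ℝ (Fin d)) k * A i k) = μ j * (v j : EuclideanSpace ℝ (Fin d)) i := by
    intro j i
    have hmv := Matrix.IsHermitian.mulVec_eigenvectorBasis hherm j
    have := congrFun hmv i
    simp only [Matrix.mulVec, dotProduct, Pi.smul_apply, smul_eq_mul] at this
    rw [← this]
    exact Finset.sum_congr rfl fun k _ => by ring
  have hfv : ∀ (x : EuclideanSpace ℝ (Fin d)) (j : Fin d),
      f2 x (v j) = μ j * ⟪(v j : EuclideanSpace ℝ (Fin d)), x⟫ := by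
    intro x j
    rw [hexp1, hinner, Finset.mul_sum]
    refine Finset.sum_congr rfl fun i _ => ?_
    rw [hexp2, heig j i]
    ring
  -- expand k in the eigenbasis
  have hk : k = ∑ j, ⟪(v j : EuclideanSpace ℝ (Fin d)), k⟫ • (v j : EuclideanSpace ℝ (Fin d)) := by
    have := (v.sum_repr k).symm
    simpa [OrthonormalBasis.repr_apply_apply, real_inner_comm] using this
  conv_lhs => rw [hk]
  rw [map_sum]
  refine Finset.sum_congr rfl fun j _ => ?_
  rw [map_smul, smul_eq_mul, hfv]
  ring

/-- Let `U : ℝ^d → ℝ` be smooth and let `σ` be a critical point of `U` whose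
Hessian is invertible with exactly one negative eigenvalue (with multiplicity).  Then for all
sufficiently small `r > 0`, the set `A(σ, r) = (B(σ, r) ∖ {σ}) ∩ {U < U σ}` has exactly two
connected components. -/
theorem sublevel_near_saddle_two_components
    (d : ℕ) (hd : 1 ≤ d) (U : EuclideanSpace ℝ (Fin d) → ℝ)
    (hU : ContDiff ℝ (⊤ : ℕ∞) U) (σ : EuclideanSpace ℝ (Fin d))
    (hcrit : gradient U σ = 0)
    (hinv : IsUnit (hessianMatrix U σ))
    (hherm : (hessianMatrix U σ).IsHermitian)
    (hindex : (Finset.univ.filter fun i => hherm.eigenvalues i < 0).card = 1) :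
    ∃ r₀ > (0 : ℝ), ∀ r : ℝ, 0 < r → r ≤ r₀ →
      ∃ S₁ S₂ : Set (EuclideanSpace ℝ (Fin d)),
        ExactlyTwoComponents ((Metric.ball σ r \ {σ}) ∩ {y | U y < U σ}) S₁ S₂ := by
  classical
  obtain ⟨i₀, hfil⟩ := Finset.card_eq_one.1 hindex
  have hi₀neg : hherm.eigenvalues i₀ < 0 := by
    have : i₀ ∈ Finset.univ.filter fun i => hherm.eigenvalues i < 0 := by
      rw [hfil]; exact Finset.mem_singleton_self i₀
    exact (Finset.mem_filter.1 this).2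
  have hothers : ∀ i, i ≠ i₀ → ¬ hherm.eigenvalues i < 0 := by
    intro i hne hneg
    have : i ∈ ({i₀} : Finset (Fin d)) := by
      rw [← hfil]; exact Finset.mem_filter.2 ⟨Finset.mem_univ i, hneg⟩
    exact hne (Finset.mem_singleton.1 this)
  have hdet : IsUnit (hessianMatrix U σ).det := (Matrix.isUnit_iff_isUnit_det _).1 hinv
  have hnonzero : ∀ i, hherm.eigenvalues i ≠ 0 := by
    intro i hi0
    have hprod := hherm.det_eq_prod_eigenvalues
    rw [hprod] at hdet
    have hne := isUnit_iff_ne_zero.1 hdet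
    apply hne
    apply Finset.prod_eq_zero (Finset.mem_univ i)
    simp [hi0]
  have hpos : ∀ i, i ≠ i₀ → 0 < hherm.eigenvalues i := fun i hi =>
    lt_of_le_of_ne (not_lt.1 (hothers i hi)) (Ne.symm (hnonzero i))
  set lam : ℝ := -hherm.eigenvalues i₀ with hlamdef
  have hlam : 0 < lam := by rw [hlamdef]; linarith
  obtain ⟨m, hm, hmle⟩ : ∃ m : ℝ, 0 < m ∧ ∀ i, i ≠ i₀ → m ≤ hherm.eigenvalues i := by
    by_cases hne : (Finset.univ.erase i₀ : Finset (Fin d)).Nonempty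
    · refine ⟨(Finset.univ.erase i₀).inf' hne hherm.eigenvalues, ?_, ?_⟩
      · obtain ⟨i, hi, hie⟩ := Finset.exists_mem_eq_inf' hne hherm.eigenvalues
        rw [hie]; exact hpos i (Finset.ne_of_mem_erase hi)
      · intro i hi
        exact Finset.inf'_le _ (Finset.mem_erase.2 ⟨hi, Finset.mem_univ i⟩)
    · exact ⟨1, one_pos, fun i hi =>
        absurd (Finset.mem_erase.2 ⟨hi, Finset.mem_univ i⟩) (fun hmem => hne ⟨i, hmem⟩)⟩
  obtain ⟨M, hmM, hMub⟩ : ∃ M : ℝ, m ≤ M ∧ ∀ i, i ≠ i₀ → hherm.eigenvalues i ≤ M := by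
    refine ⟨max m (Finset.univ.sup' ⟨i₀, Finset.mem_univ i₀⟩ hherm.eigenvalues),
      le_max_left _ _, ?_⟩
    intro i _
    exact le_trans (Finset.le_sup' _ (Finset.mem_univ i)) (le_max_right _ _)
  have hM1 : (0:ℝ) < M + 1 := by linarith
  have h3m : (0:ℝ) < 3 * m + 2 * lam := by linarith
  -- the small parameter ε
  set ε : ℝ := min 1 (min (m / 4) (min (lam / 8)
    (lam * m ^ 3 / (8 * (3 * m + 2 * lam) * (M + 1))))) with hεdef
  have hε : 0 < ε := by
    refine lt_min one_pos (lt_min (by linarith) (lt_min (by linarith) (by positivity)))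
  have hεa : ε ≤ 1 := min_le_left _ _
  have hεb : ε ≤ m / 4 := le_trans (min_le_right _ _) (min_le_left _ _)
  have hεc : ε ≤ lam / 8 :=
    le_trans (min_le_right _ _) (le_trans (min_le_right _ _) (min_le_left _ _))
  have hεd : ε ≤ lam * m ^ 3 / (8 * (3 * m + 2 * lam) * (M + 1)) :=
    le_trans (min_le_right _ _) (le_trans (min_le_right _ _) (min_le_right _ _))
  have hε2 : 4 * ε ≤ m := by linarith
  have hε3 : 8 * ε ≤ lam := by linarith
  have hεkey : ε * (8 * (3 * m + 2 * lam) * (M + 1)) ≤ lam * m ^ 3 := by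
    rw [← le_div_iff₀ (by positivity)]
    exact hεd
  clear_value lam ε
  have hεB : ε + (ε + M / 2) * (ε ^ 2 * ((3 * m + 2 * lam) / m) / m ^ 2) < lam / 2 := by
    have hm3 : (0:ℝ) < m ^ 3 := by positivity
    have hrw : ε ^ 2 * ((3 * m + 2 * lam) / m) / m ^ 2 = ε ^ 2 * (3 * m + 2 * lam) / m ^ 3 := by
      field_simp
    have hrw2 : ε + (ε + M / 2) * (ε ^ 2 * (3 * m + 2 * lam) / m ^ 3)
        = (ε * m ^ 3 + (ε + M / 2) * (ε ^ 2 * (3 * m + 2 * lam))) / m ^ 3 := by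
      field_simp
    rw [hrw, hrw2, div_lt_iff₀ hm3]
    have t2 : ε ^ 2 ≤ ε := by nlinarith
    have t3 : ε + M / 2 ≤ M + 1 := by linarith
    have t4 : (ε + M / 2) * (ε ^ 2 * (3 * m + 2 * lam)) ≤ (M + 1) * (ε * (3 * m + 2 * lam)) := by
      apply mul_le_mul t3 (mul_le_mul_of_nonneg_right t2 h3m.le) (by positivity) (by linarith)
    have t5 : 8 * ((M + 1) * (ε * (3 * m + 2 * lam))) ≤ lam * m ^ 3 := by nlinarith [hεkey]
    nlinarith [mul_pos hlam hm3, mul_le_mul_of_nonneg_right hε3 hm3.le, t4, t5]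
  -- differentiability and the second derivative
  have hUdiff : Differentiable ℝ U := hU.differentiable (by simp)
  have hfd : ContDiff ℝ (⊤ : ℕ∞) (fderiv ℝ U) := hU.fderiv_right (m := (⊤ : ℕ∞)) (by simp)
  set f2 := fderiv ℝ (fderiv ℝ U) σ with hf2def
  have hf2d : HasFDerivAt (fderiv ℝ U) f2 σ := (hfd.differentiable (by simp) σ).hasFDerivAt
  set Lfun : EuclideanSpace ℝ (Fin d) → EuclideanSpace ℝ (Fin d) :=
    fun h => (InnerProductSpace.toDual ℝ (EuclideanSpace ℝ (Fin d))).symm (f2 h) with hLfdef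
  have hLcinner : ∀ h k : EuclideanSpace ℝ (Fin d), ⟪Lfun h, k⟫ = f2 h k := by
    intro h k
    simp only [hLfdef]
    exact toDual_symm_apply
  have hLsmul : ∀ (c : ℝ) (h : EuclideanSpace ℝ (Fin d)), Lfun (c • h) = c • Lfun h := by
    intro c h
    simp only [hLfdef, map_smul]
  have hfzero : fderiv ℝ U σ = 0 := by
    have h0 : (InnerProductSpace.toDual ℝ (EuclideanSpace ℝ (Fin d))).symm (fderiv ℝ U σ) = 0 :=
      hcrit
    simpa using h0
  -- spectral decomposition of f2
  set R : EuclideanSpace ℝ (Fin d) → EuclideanSpace ℝ (Fin d) → ℝ :=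
    fun h k => ∑ i ∈ Finset.univ.erase i₀,
      hherm.eigenvalues i * (⟪hherm.eigenvectorBasis i, h⟫ * ⟪hherm.eigenvectorBasis i, k⟫)
    with hRdef
  have hsplit : ∀ h k : EuclideanSpace ℝ (Fin d),
      f2 h k = -lam * (⟪hherm.eigenvectorBasis i₀, h⟫ * ⟪hherm.eigenvectorBasis i₀, k⟫)
        + R h k := by
    intro h k
    rw [hf2def, hess_expand U σ hherm h k, ← Finset.sum_erase_add _ _ (Finset.mem_univ i₀),
      hRdef, hlamdef]
    ring
  have hee : ∀ i, ‖(hherm.eigenvectorBasis i : EuclideanSpace ℝ (Fin d))‖ = 1 :=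
    fun i => hherm.eigenvectorBasis.orthonormal.1 i
  have horth : ∀ i j, i ≠ j →
      ⟪(hherm.eigenvectorBasis i : EuclideanSpace ℝ (Fin d)), hherm.eigenvectorBasis j⟫ = 0 :=
    fun i j hij => hherm.eigenvectorBasis.orthonormal.2 hij
  have hRlin : ∀ (t s : ℝ) (a b k : EuclideanSpace ℝ (Fin d)),
      R (t • a + s • b) k = t * R a k + s * R b k := by
    intro t s a b k
    simp only [hRdef]
    rw [Finset.mul_sum, Finset.mul_sum, ← Finset.sum_add_distrib]
    refine Finset.sum_congr rfl fun i _ => ?_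
    rw [inner_add_right, real_inner_smul_right, real_inner_smul_right]
    ring
  have hpars : ∀ x : EuclideanSpace ℝ (Fin d),
      ‖x‖ ^ 2 = ∑ i, ⟪(hherm.eigenvectorBasis i : EuclideanSpace ℝ (Fin d)), x⟫ ^ 2 := by
    intro x
    calc ‖x‖ ^ 2 = ⟪x, x⟫ := (real_inner_self_eq_norm_sq x).symm
      _ = ∑ i, ⟪x, hherm.eigenvectorBasis i⟫ * ⟪(hherm.eigenvectorBasis i :
            EuclideanSpace ℝ (Fin d)), x⟫ := (hherm.eigenvectorBasis.sum_inner_mul_inner x x).symm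
      _ = ∑ i, ⟪(hherm.eigenvectorBasis i : EuclideanSpace ℝ (Fin d)), x⟫ ^ 2 :=
          Finset.sum_congr rfl fun i _ => by rw [real_inner_comm]; ring
  have hperp_eq : ∀ h : EuclideanSpace ℝ (Fin d),
      ‖h - ⟪(hherm.eigenvectorBasis i₀ : EuclideanSpace ℝ (Fin d)), h⟫ •
        (hherm.eigenvectorBasis i₀ : EuclideanSpace ℝ (Fin d))‖ ^ 2
      = ∑ i ∈ Finset.univ.erase i₀,
          ⟪(hherm.eigenvectorBasis i : EuclideanSpace ℝ (Fin d)), h⟫ ^ 2 := by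
    intro h
    rw [hpars]
    have hcoord : ∀ i, ⟪(hherm.eigenvectorBasis i : EuclideanSpace ℝ (Fin d)),
        h - ⟪(hherm.eigenvectorBasis i₀ : EuclideanSpace ℝ (Fin d)), h⟫ •
          (hherm.eigenvectorBasis i₀ : EuclideanSpace ℝ (Fin d))⟫
        = if i = i₀ then 0 else ⟪(hherm.eigenvectorBasis i : EuclideanSpace ℝ (Fin d)), h⟫ := by
      intro i
      rw [inner_sub_right, real_inner_smul_right]
      by_cases hii : i = i₀
      · subst hii
        rw [if_pos rfl, real_inner_self_eq_norm_sq, hee i]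
        ring
      · rw [horth i i₀ hii, mul_zero, sub_zero, if_neg hii]
    calc (∑ i, ⟪(hherm.eigenvectorBasis i : EuclideanSpace ℝ (Fin d)),
            h - ⟪(hherm.eigenvectorBasis i₀ : EuclideanSpace ℝ (Fin d)), h⟫ •
              (hherm.eigenvectorBasis i₀ : EuclideanSpace ℝ (Fin d))⟫ ^ 2)
        = ∑ i, (if i = i₀ then 0 else
            ⟪(hherm.eigenvectorBasis i : EuclideanSpace ℝ (Fin d)), h⟫) ^ 2 :=
          Finset.sum_congr rfl fun i _ => by rw [hcoord]
      _ = ∑ i ∈ Finset.univ.erase i₀,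
            ⟪(hherm.eigenvectorBasis i : EuclideanSpace ℝ (Fin d)), h⟫ ^ 2 := by
          rw [← Finset.sum_erase_add _ _ (Finset.mem_univ i₀), if_pos rfl]
          rw [zero_pow two_ne_zero, add_zero]
          refine Finset.sum_congr rfl fun i hi => ?_
          rw [if_neg (Finset.mem_erase.1 hi).1]
  have hRlow : ∀ h : EuclideanSpace ℝ (Fin d),
      m * ‖h - ⟪(hherm.eigenvectorBasis i₀ : EuclideanSpace ℝ (Fin d)), h⟫ •
        (hherm.eigenvectorBasis i₀ : EuclideanSpace ℝ (Fin d))‖ ^ 2 ≤ R h h := by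
    intro h
    rw [hperp_eq, Finset.mul_sum, hRdef]
    refine Finset.sum_le_sum fun i hi => ?_
    have := hmle i (Finset.mem_erase.1 hi).1
    nlinarith [sq_nonneg (⟪(hherm.eigenvectorBasis i : EuclideanSpace ℝ (Fin d)), h⟫)]
  have hRhigh : ∀ h : EuclideanSpace ℝ (Fin d),
      R h h ≤ M * ‖h - ⟪(hherm.eigenvectorBasis i₀ : EuclideanSpace ℝ (Fin d)), h⟫ •
        (hherm.eigenvectorBasis i₀ : EuclideanSpace ℝ (Fin d))‖ ^ 2 := by
    intro h
    rw [hperp_eq, Finset.mul_sum, hRdef]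
    refine Finset.sum_le_sum fun i hi => ?_
    have := hMub i (Finset.mem_erase.1 hi).1
    nlinarith [sq_nonneg (⟪(hherm.eigenvectorBasis i : EuclideanSpace ℝ (Fin d)), h⟫)]
  -- choose the radius via the little-o property of the gradient
  have hlil := hf2d.isLittleO
  have hev := (Asymptotics.isLittleO_iff.1 hlil) hε
  rw [Metric.eventually_nhds_iff] at hev
  obtain ⟨ρ, hρpos, hρ⟩ := hev
  have hgrad' : ∀ z : EuclideanSpace ℝ (Fin d), ‖z - σ‖ < ρ →
      ‖gradient U z - Lfun (z - σ)‖ ≤ ε * ‖z - σ‖ := by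
    intro z hz
    have h1 := hρ (show dist z σ < ρ by rwa [dist_eq_norm])
    rw [hfzero, sub_zero] at h1
    have h2 : gradient U z - Lfun (z - σ)
        = (InnerProductSpace.toDual ℝ (EuclideanSpace ℝ (Fin d))).symm
            (fderiv ℝ U z - f2 (z - σ)) := by
      rw [map_sub]
      rfl
    rw [h2, LinearIsometryEquiv.norm_map]
    exact h1
  have htay0 : ∀ h : EuclideanSpace ℝ (Fin d), ‖h‖ < ρ →
      |U (σ + h) - U σ - ⟪Lfun h, h⟫ / 2| ≤ ε * ‖h‖ ^ 2 :=
    fun h hh => taylor_bound U σ hUdiff Lfun hLsmul ε ρ hε.le hgrad' h hh (norm_nonneg h)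
  refine ⟨ρ, hρpos, ?_⟩
  intro r hr0 hrle
  -- apply the core lemma on both sides
  have hcore1 := side_core U σ (hherm.eigenvectorBasis i₀) (hee i₀) hUdiff
    Lfun R lam m M ε ρ r hlam hm hmM hε hε2 hε3 hεB hr0 hrle
    (fun h k => by rw [hLcinner, hsplit])
    hRlin
    (fun k => by
      rw [hRdef]
      refine Finset.sum_eq_zero fun i hi => ?_
      rw [horth i i₀ (Finset.mem_erase.1 hi).1, zero_mul, mul_zero])
    hRlow hRhigh hgrad'
    (fun h hh => by
      have heq : ⟪Lfun h, h⟫ = -lam * ⟪(hherm.eigenvectorBasis i₀ :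
          EuclideanSpace ℝ (Fin d)), h⟫ ^ 2 + R h h := by
        rw [hLcinner, hsplit]; ring
      have := htay0 h hh
      rwa [heq] at this)
  have hcore2 := side_core U σ (-(hherm.eigenvectorBasis i₀ : EuclideanSpace ℝ (Fin d)))
    (by rw [norm_neg]; exact hee i₀) hUdiff
    Lfun R lam m M ε ρ r hlam hm hmM hε hε2 hε3 hεB hr0 hrle
    (fun h k => by rw [hLcinner, hsplit, inner_neg_left, inner_neg_left]; ring)
    hRlin
    (fun k => by
      rw [hRdef]
      refine Finset.sum_eq_zero fun i hi => ?_
      rw [inner_neg_right, horth i i₀ (Finset.mem_erase.1 hi).1, neg_zero, zero_mul, mul_zero])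
    (fun h => by
      have hneg : h - ⟪-(hherm.eigenvectorBasis i₀ : EuclideanSpace ℝ (Fin d)), h⟫ •
          (-(hherm.eigenvectorBasis i₀ : EuclideanSpace ℝ (Fin d)))
          = h - ⟪(hherm.eigenvectorBasis i₀ : EuclideanSpace ℝ (Fin d)), h⟫ •
            (hherm.eigenvectorBasis i₀ : EuclideanSpace ℝ (Fin d)) := by
        rw [inner_neg_left]; module
      rw [hneg]; exact hRlow h)
    (fun h => by
      have hneg : h - ⟪-(hherm.eigenvectorBasis i₀ : EuclideanSpace ℝ (Fin d)), h⟫ •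
          (-(hherm.eigenvectorBasis i₀ : EuclideanSpace ℝ (Fin d)))
          = h - ⟪(hherm.eigenvectorBasis i₀ : EuclideanSpace ℝ (Fin d)), h⟫ •
            (hherm.eigenvectorBasis i₀ : EuclideanSpace ℝ (Fin d)) := by
        rw [inner_neg_left]; module
      rw [hneg]; exact hRhigh h)
    hgrad'
    (fun h hh => by
      have heq : ⟪Lfun h, h⟫ = -lam * ⟪-(hherm.eigenvectorBasis i₀ :
          EuclideanSpace ℝ (Fin d)), h⟫ ^ 2 + R h h := by
        rw [hLcinner, hsplit, inner_neg_left]; ring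
      have := htay0 h hh
      rwa [heq] at this)
  obtain ⟨hne1, hconn1, hne0⟩ := hcore1
  obtain ⟨hne2, hconn2, -⟩ := hcore2
  have hf1 : Continuous fun y : EuclideanSpace ℝ (Fin d) =>
      ⟪(hherm.eigenvectorBasis i₀ : EuclideanSpace ℝ (Fin d)), y - σ⟫ :=
    Continuous.inner continuous_const (continuous_id.sub continuous_const)
  have hf2c : Continuous fun y : EuclideanSpace ℝ (Fin d) =>
      ⟪-(hherm.eigenvectorBasis i₀ : EuclideanSpace ℝ (Fin d)), y - σ⟫ :=
    Continuous.inner continuous_const (continuous_id.sub continuous_const)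
  have hT2 : ∀ x ∈ (Metric.ball σ r \ {σ}) ∩ {y | U y < U σ},
      ⟪-(hherm.eigenvectorBasis i₀ : EuclideanSpace ℝ (Fin d)), x - σ⟫ ≠ 0 := by
    intro x hx
    rw [inner_neg_left]
    exact neg_ne_zero.2 (hne0 x hx)
  refine ⟨_, _, hne1, hne2, ?_, ?_, ?_, ?_⟩
  · -- the two components are distinct
    intro heq
    obtain ⟨x, hx⟩ := hne1
    have hx2 := heq ▸ hx
    have h1 : (0:ℝ) < ⟪(hherm.eigenvectorBasis i₀ : EuclideanSpace ℝ (Fin d)), x - σ⟫ := hx.2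
    have h2 : (0:ℝ) < ⟪-(hherm.eigenvectorBasis i₀ : EuclideanSpace ℝ (Fin d)), x - σ⟫ := hx2.2
    rw [inner_neg_left] at h2
    linarith
  · intro x hx
    exact comp_eq_of_sides hf1 hne0 hconn1 hx
  · intro x hx
    exact comp_eq_of_sides hf2c hT2 hconn2 hx
  · intro x hx
    rcases Ne.lt_or_gt (hne0 x hx) with h | h
    · right
      refine comp_eq_of_sides hf2c hT2 hconn2 ⟨hx, ?_⟩
      show (0:ℝ) < ⟪-(hherm.eigenvectorBasis i₀ : EuclideanSpace ℝ (Fin d)), x - σ⟫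
      rw [inner_neg_left]
      linarith
    · left
      exact comp_eq_of_sides hf1 hne0 hconn1 ⟨hx, h⟩
end

section
/- Let U : ℝ^d → ℝ be continuous and coercive, and let m′ and m″ be two distinct local minima of U. Then the connected component of the set {x ∈ ℝ^d : U(x) ≤ Θ(m′, m″)} containing m′ also contains m″. -/
/-- The communication height `Θ(x, y)` between `x` and `y`: the infimum, over all continuous
paths `z : [0, 1] → ℝ^d` with `z 0 = x` and `z 1 = y`, of `max_{t ∈ [0, 1]} U (z t)`. -/
noncomputable def commHeight {d : ℕ} (U : EuclideanSpace ℝ (Fin d) → ℝ)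
    (x y : EuclideanSpace ℝ (Fin d)) : ℝ :=
  sInf {h : ℝ | ∃ z : ℝ → EuclideanSpace ℝ (Fin d),
    ContinuousOn z (Set.Icc 0 1) ∧ z 0 = x ∧ z 1 = y ∧
    h = sSup (U '' (z '' Set.Icc 0 1))}


section Aux

variable {d : ℕ} (U : EuclideanSpace ℝ (Fin d) → ℝ)

/-- The set of heights of paths from `x` to `y`. -/
def pathHeights (x y : EuclideanSpace ℝ (Fin d)) : Set ℝ :=
  {h : ℝ | ∃ z : ℝ → EuclideanSpace ℝ (Fin d),
    ContinuousOn z (Set.Icc 0 1) ∧ z 0 = x ∧ z 1 = y ∧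
    h = sSup (U '' (z '' Set.Icc 0 1))}

lemma pathHeights_nonempty (x y : EuclideanSpace ℝ (Fin d)) :
    (pathHeights U x y).Nonempty := by
  refine ⟨_, fun t => (1 - t) • x + t • y, ?_, by simp, by simp, rfl⟩
  exact Continuous.continuousOn (by continuity)

lemma le_of_mem_pathHeights (hU : Continuous U) {x y : EuclideanSpace ℝ (Fin d)} {h : ℝ}
    (hh : h ∈ pathHeights U x y) :
    ∀ z : ℝ → EuclideanSpace ℝ (Fin d), ContinuousOn z (Set.Icc 0 1) → z 0 = x → z 1 = y →
      h = sSup (U '' (z '' Set.Icc 0 1)) →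
      ∀ t ∈ Set.Icc (0:ℝ) 1, U (z t) ≤ h := by
  rintro z hz h0 h1 rfl t ht
  have hcomp : IsCompact (U '' (z '' Set.Icc 0 1)) :=
    ((isCompact_Icc.image_of_continuousOn hz).image hU)
  exact le_csSup hcomp.bddAbove ⟨z t, ⟨t, ht, rfl⟩, rfl⟩

end Aux

/-- Let `U : ℝ^d → ℝ` be continuous and coercive and let `m'` and `m''` be
two distinct local minima of `U`.  Then the connected component of
`{x : U x ≤ Θ(m', m'')}` containing `m'` also contains `m''`. -/
theorem local_minima_in_same_component_at_commHeight
    (d : ℕ) (hd : 1 ≤ d) (U : EuclideanSpace ℝ (Fin d) → ℝ)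
    (hU : Continuous U)
    (hcoer : Filter.Tendsto U (Filter.cocompact (EuclideanSpace ℝ (Fin d))) Filter.atTop)
    (m' m'' : EuclideanSpace ℝ (Fin d))
    (hm' : IsLocalMin U m') (hm'' : IsLocalMin U m'') (hne : m' ≠ m'') :
    m'' ∈ connectedComponentIn {x | U x ≤ commHeight U m' m''} m' := by
  classical
  set Θ := commHeight U m' m'' with hΘdef
  set P := {h : ℝ | ∃ z : ℝ → EuclideanSpace ℝ (Fin d),
    ContinuousOn z (Set.Icc 0 1) ∧ z 0 = m' ∧ z 1 = m'' ∧
    h = sSup (U '' (z '' Set.Icc 0 1))} with hPdef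
  have hPne : P.Nonempty := pathHeights_nonempty U m' m''
  -- every h ∈ P bounds U on its path; in particular h ≥ U m' and h ≥ U m''
  have hbd : ∀ h ∈ P, U m' ≤ h ∧ U m'' ≤ h := by
    rintro h ⟨z, hz, h0, h1, rfl⟩
    have key := le_of_mem_pathHeights U hU (x := m') (y := m'')
      ⟨z, hz, h0, h1, rfl⟩ z hz h0 h1 rfl
    constructor
    · have := key 0 ⟨le_refl _, zero_le_one⟩; rwa [h0] at this
    · have := key 1 ⟨zero_le_one, le_refl _⟩; rwa [h1] at this
  have hPbdd : BddBelow P := ⟨U m', fun h hh => (hbd h hh).1⟩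
  have hΘP : Θ = sInf P := rfl
  have hΘm' : U m' ≤ Θ := hΘP ▸ le_csInf hPne fun h hh => (hbd h hh).1
  have hΘm'' : U m'' ≤ Θ := hΘP ▸ le_csInf hPne fun h hh => (hbd h hh).2
  set S : Set (EuclideanSpace ℝ (Fin d)) := {x | U x ≤ Θ} with hSdef
  have hm'S : m' ∈ S := hΘm'
  have hm''S : m'' ∈ S := hΘm''
  -- sublevel sets are compact
  have hsub : ∀ c : ℝ, IsCompact {x : EuclideanSpace ℝ (Fin d) | U x ≤ c} := by
    intro c
    have : ∀ᶠ x in Filter.cocompact _, c + 1 ≤ U x :=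
      hcoer.eventually (Filter.eventually_ge_atTop (c + 1))
    rw [Filter.Eventually, Filter.mem_cocompact] at this
    obtain ⟨K, hK, hKsub⟩ := this
    refine hK.of_isClosed_subset (isClosed_le hU continuous_const) ?_
    intro x hx
    by_contra hxK
    have : c + 1 ≤ U x := hKsub hxK
    have : U x ≤ c := hx
    linarith
  have hScomp : IsCompact S := hsub Θ
  -- suppose m'' not in the component
  by_contra hcon
  rw [connectedComponentIn_eq_image hm'S] at hcon
  -- work in the subtype S
  haveI : CompactSpace S := isCompact_iff_compactSpace.mp hScomp
  -- get a clopen set separating components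
  have hmem : (⟨m'', hm''S⟩ : S) ∉ connectedComponent (⟨m', hm'S⟩ : S) := by
    intro hmem
    exact hcon ⟨⟨m'', hm''S⟩, hmem, rfl⟩
  rw [connectedComponent_eq_iInter_isClopen] at hmem
  simp only [Set.mem_iInter, not_forall] at hmem
  obtain ⟨⟨Z, hZclopen, hZm'⟩, hZm''⟩ := hmem
  -- A and B : disjoint compact sets covering S
  set A : Set (EuclideanSpace ℝ (Fin d)) := Subtype.val '' Z with hAdef
  set B : Set (EuclideanSpace ℝ (Fin d)) := Subtype.val '' Zᶜ with hBdef
  have hAcomp : IsCompact A := (hZclopen.isClosed.isCompact).image continuous_subtype_val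
  have hBcomp : IsCompact B :=
    ((hZclopen.compl.isClosed).isCompact).image continuous_subtype_val
  have hABdisj : Disjoint A B := by
    rw [Set.disjoint_iff]
    rintro x ⟨⟨a, haZ, rfl⟩, ⟨b, hbZ, hab⟩⟩
    exact hbZ (by rw [show b = a from Subtype.val_injective hab]; exact haZ)
  obtain ⟨Uo, Vo, hUo, hVo, hAU, hBV, hUVdisj⟩ :=
    SeparatedNhds.of_isCompact_isCompact hAcomp hBcomp hABdisj
  have hm'U : m' ∈ Uo := hAU ⟨⟨m', hm'S⟩, hZm', rfl⟩
  have hm''V : m'' ∈ Vo := hBV ⟨⟨m'', hm''S⟩, hZm'', rfl⟩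
  have hSsub : S ⊆ Uo ∪ Vo := by
    intro x hx
    by_cases hxZ : (⟨x, hx⟩ : S) ∈ Z
    · exact Or.inl (hAU ⟨⟨x, hx⟩, hxZ, rfl⟩)
    · exact Or.inr (hBV ⟨⟨x, hx⟩, hxZ, rfl⟩)
  -- on F := (Uo ∪ Vo)ᶜ, U is uniformly > Θ
  set F : Set (EuclideanSpace ℝ (Fin d)) := (Uo ∪ Vo)ᶜ with hFdef
  have hFS : ∀ x ∈ F, Θ < U x := by
    intro x hx
    by_contra hle
    exact hx (hSsub (not_lt.mp hle))
  obtain ⟨c, hcΘ, hc⟩ : ∃ c, Θ < c ∧ ∀ x ∈ F, c ≤ U x := by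
    set T := F ∩ {x : EuclideanSpace ℝ (Fin d) | U x ≤ Θ + 1} with hTdef
    have hTcomp : IsCompact T :=
      (hsub (Θ + 1)).of_isClosed_subset
        (((hUo.union hVo).isClosed_compl).inter (isClosed_le hU continuous_const))
        Set.inter_subset_right
    rcases T.eq_empty_or_nonempty with hT | hT
    · refine ⟨Θ + 1, by linarith, fun x hx => ?_⟩
      by_contra hlt
      have hxT : x ∈ T := ⟨hx, le_of_lt (not_le.mp hlt)⟩
      rw [hT] at hxT
      exact hxT
    · obtain ⟨x₀, hx₀T, hx₀min⟩ := hTcomp.exists_isMinOn hT hU.continuousOn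
      refine ⟨min (U x₀) (Θ + 1), lt_min (hFS x₀ hx₀T.1) (by linarith), fun x hx => ?_⟩
      by_cases hxT : U x ≤ Θ + 1
      · exact le_trans (min_le_left _ _) (hx₀min ⟨hx, hxT⟩)
      · exact le_trans (min_le_right _ _) (le_of_lt (not_le.mp hxT))
  -- every path from m' to m'' must pass through F, so every h ∈ P is ≥ c
  have hPge : ∀ h ∈ P, c ≤ h := by
    rintro h ⟨z, hz, h0, h1, rfl⟩
    have himg : IsPreconnected (z '' Set.Icc 0 1) :=
      (isPreconnected_Icc).image z hz
    have hcross : ∃ t ∈ Set.Icc (0:ℝ) 1, z t ∈ F := by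
      by_contra hno
      push_neg at hno
      have hcov : z '' Set.Icc 0 1 ⊆ Uo ∪ Vo := by
        rintro _ ⟨t, ht, rfl⟩
        exact not_not.mp (hno t ht)
      have h1' : (z '' Set.Icc 0 1 ∩ Uo).Nonempty :=
        ⟨m', ⟨0, ⟨le_refl _, zero_le_one⟩, h0⟩, hm'U⟩
      have h2' : (z '' Set.Icc 0 1 ∩ Vo).Nonempty :=
        ⟨m'', ⟨1, ⟨zero_le_one, le_refl _⟩, h1⟩, hm''V⟩
      obtain ⟨p, _, hpU, hpV⟩ := himg Uo Vo hUo hVo hcov h1' h2'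
      exact hUVdisj.ne_of_mem hpU hpV rfl
    obtain ⟨t, ht, htF⟩ := hcross
    have := le_of_mem_pathHeights U hU (x := m') (y := m'')
      ⟨z, hz, h0, h1, rfl⟩ z hz h0 h1 rfl t ht
    exact le_trans (hc _ htF) this
  have : c ≤ Θ := hΘP ▸ le_csInf hPne hPge
  linarith
end

section
/- Let U : ℝ^d → ℝ be three times continuously differentiable, coercive, with finitely many critical points, all nondegenerate, and assume U has at least two local minima. Fix a local minimum m, let M₀ denote the (finite) set of local minima of U, and set Γ(m) := min_{m′ ∈ M₀, m′ ≠ m} Θ(m, m′) − U(m). Let W be the connected component of {x ∈ ℝ^d : U(x) < U(m) + Γ(m)} containing m. Then there exists another connected component W′ of {x ∈ ℝ^d : U(x) < U(m) + Γ(m)} such that W ∩ W′ = ∅ and cl(W) ∩ cl(W′) ≠ ∅. -/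
/-- The depth `Γ(m) = min_{m' ∈ M₀, m' ≠ m} Θ(m, m') - U(m)` of a local minimum `m` of `U`,
where `M₀` is the set of local minima of `U`. -/
noncomputable def depth {d : ℕ} (U : EuclideanSpace ℝ (Fin d) → ℝ)
    (m : EuclideanSpace ℝ (Fin d)) : ℝ :=
  sInf {h : ℝ | ∃ m', IsLocalMin U m' ∧ m' ≠ m ∧ h = commHeight U m m'} - U m

open Set Metric Filter Topology

section Topological

variable {X : Type*} [TopologicalSpace X]

theorem isCompact_sublevel_of_tendsto_cocompact {U : X → ℝ} (hUc : Continuous U)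
    (hcoer : Tendsto U (cocompact X) atTop) (c : ℝ) : IsCompact {x | U x ≤ c} := by
  obtain ⟨K, hK, hKsub⟩ := mem_cocompact.1 (hcoer (Ioi_mem_atTop c))
  refine hK.of_isClosed_subset (isClosed_le hUc continuous_const) fun x hx => ?_
  by_contra hxK
  exact (hKsub hxK).not_ge (show U x ≤ c from hx)

theorem isCompact_closure_connectedComponentIn_sublevel {U : X → ℝ} (hUc : Continuous U)
    (hcoer : Tendsto U (cocompact X) atTop) (Λ : ℝ) (x : X) :
    IsCompact (closure (connectedComponentIn {y | U y < Λ} x)) :=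
  (isCompact_sublevel_of_tendsto_cocompact hUc hcoer Λ).of_isClosed_subset isClosed_closure
    (closure_minimal (fun y hy => show U y ≤ Λ from (connectedComponentIn_subset _ x hy).le)
      (isClosed_le hUc continuous_const))

theorem exists_pos_add_le_of_forall_lt {U f : X → ℝ} (hUc : Continuous U)
    (hcoer : Tendsto U (cocompact X) atTop) (hf : Continuous f) {s Λ : ℝ}
    (hlt : ∀ z, f z = s → Λ < U z) : ∃ η > 0, ∀ z, f z = s → Λ + η ≤ U z := by
  rcases eq_empty_or_nonempty (f ⁻¹' {s}) with hempty | ⟨z₀, hz₀⟩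
  · exact ⟨1, one_pos, fun z hz => absurd (hempty.subset hz) (notMem_empty z)⟩
  obtain ⟨z₁, hz₁, hmin⟩ := hUc.continuousOn.exists_isMinOn' (isClosed_singleton.preimage hf) hz₀
    ((hcoer.eventually_ge_atTop (U z₀)).filter_mono inf_le_left)
  exact ⟨U z₁ - Λ, sub_pos.2 (hlt z₁ hz₁), fun z hz => by linarith [show U z₁ ≤ U z from hmin hz]⟩

theorem exists_isLocalMin_mem_connectedComponentIn [LocallyConnectedSpace X] {U : X → ℝ}
    (hUc : Continuous U) (hcoer : Tendsto U (cocompact X) atTop) {Λ : ℝ} {x : X}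
    (hx : U x < Λ) : ∃ c ∈ connectedComponentIn {y | U y < Λ} x, IsLocalMin U c := by
  set S := {y | U y < Λ}
  set C := connectedComponentIn S x
  have hSopen : IsOpen S := isOpen_lt hUc continuous_const
  have hxC : x ∈ C := mem_connectedComponentIn hx
  have hCcompact : IsCompact (closure C) :=
    isCompact_closure_connectedComponentIn_sublevel hUc hcoer Λ x
  obtain ⟨q, hqcl, hqmin⟩ := hCcompact.exists_isMinOn ⟨x, subset_closure hxC⟩ hUc.continuousOn
  have hqS : q ∈ S := (hqmin (subset_closure hxC)).trans_lt hx
  obtain ⟨y, hyq, hyC⟩ :=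
    mem_closure_iff.1 hqcl _ hSopen.connectedComponentIn (mem_connectedComponentIn hqS)
  have hqC : q ∈ C := by
    rw [show C = connectedComponentIn S q from
      (connectedComponentIn_eq hyC).trans (connectedComponentIn_eq hyq).symm]
    exact mem_connectedComponentIn hqS
  exact ⟨q, hqC, mem_of_superset (hSopen.connectedComponentIn.mem_nhds hqC)
    fun y hy => hqmin (subset_closure hy)⟩

theorem exists_connectedComponentIn_closure_inter_nonempty {S : Set X}
    (hfin : (connectedComponentIn S '' S).Finite) {x : X}
    (h : ¬Disjoint (closure (connectedComponentIn S x))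
      (closure (S \ connectedComponentIn S x))) :
    ∃ y ∈ S, connectedComponentIn S x ∩ connectedComponentIn S y = ∅ ∧
      (closure (connectedComponentIn S x) ∩ closure (connectedComponentIn S y)).Nonempty := by
  set W := connectedComponentIn S x
  have hcover : S \ W ⊆ ⋃ C ∈ connectedComponentIn S '' (S \ W), C := fun y hy =>
    mem_biUnion (mem_image_of_mem _ hy) (mem_connectedComponentIn hy.1)
  have hfin' : (connectedComponentIn S '' (S \ W)).Finite := hfin.subset (image_mono sdiff_subset)
  obtain ⟨_, ⟨y, hy, rfl⟩, hmeet⟩ : ∃ C ∈ connectedComponentIn S '' (S \ W),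
      ¬Disjoint (closure W) (closure C) := by
    by_contra! hdisj
    exact h (((disjoint_iUnion₂_right.2 hdisj).mono_right
      (hfin'.closure_biUnion _).le).mono_right (closure_mono hcover))
  refine ⟨y, hy.1, eq_empty_of_forall_notMem fun z ⟨hzW, hzy⟩ => hy.2 ?_,
    not_disjoint_iff_nonempty_inter.1 hmeet⟩
  rw [show W = connectedComponentIn S y from
    (connectedComponentIn_eq hzW).trans (connectedComponentIn_eq hzy).symm]
  exact mem_connectedComponentIn hy.1

theorem IsOpen.joinedIn_of_mem_connectedComponentIn [LocallyPathConnectedSpace X] {S : Set X}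
    (hS : IsOpen S) {x y : X} (hx : x ∈ S) (hy : y ∈ connectedComponentIn S x) :
    JoinedIn S x y :=
  ((hS.connectedComponentIn.isConnected_iff_isPathConnected.1
    (isConnected_connectedComponentIn_iff.2 hx)).joinedIn x (mem_connectedComponentIn hx)
    y hy).mono (connectedComponentIn_subset S x)

end Topological

section Gradient

variable {E : Type*} [NormedAddCommGroup E] [InnerProductSpace ℝ E] [CompleteSpace E]
  {U : E → ℝ}

theorem IsLocalMin.gradient_eq_zero {x : E} (h : IsLocalMin U x) : gradient U x = 0 := by
  simp [gradient, h.fderiv_eq_zero]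

theorem finite_image_connectedComponentIn_sublevel (hUc : Continuous U)
    (hcoer : Tendsto U (cocompact E) atTop) (hfin : {x | gradient U x = 0}.Finite) (Λ : ℝ) :
    (connectedComponentIn {x | U x < Λ} '' {x | U x < Λ}).Finite := by
  refine (hfin.image (connectedComponentIn {x | U x < Λ})).subset ?_
  rintro _ ⟨x, hx, rfl⟩
  obtain ⟨c, hc, hcmin⟩ := exists_isLocalMin_mem_connectedComponentIn hUc hcoer hx
  exact ⟨c, hcmin.gradient_eq_zero, (connectedComponentIn_eq hc).symm⟩

end Gradient

section CommHeight

variable {d : ℕ} {U : EuclideanSpace ℝ (Fin d) → ℝ} {x y : EuclideanSpace ℝ (Fin d)}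

theorem le_sSup_image_path (hUc : Continuous U) {z : ℝ → EuclideanSpace ℝ (Fin d)}
    (hz : ContinuousOn z (Icc 0 1)) {t : ℝ} (ht : t ∈ Icc (0 : ℝ) 1) :
    U (z t) ≤ sSup (U '' (z '' Icc 0 1)) :=
  le_csSup ((isCompact_Icc.image_of_continuousOn hz).image hUc).bddAbove
    (mem_image_of_mem U (mem_image_of_mem z ht))

theorem commHeight_le (hUc : Continuous U) {z : ℝ → EuclideanSpace ℝ (Fin d)}
    (hz : ContinuousOn z (Icc 0 1)) (h0 : z 0 = x) (h1 : z 1 = y) :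
    commHeight U x y ≤ sSup (U '' (z '' Icc 0 1)) := by
  refine csInf_le ⟨U x, ?_⟩ ⟨z, hz, h0, h1, rfl⟩
  rintro _ ⟨w, hw, hw0, -, rfl⟩
  exact hw0 ▸ le_sSup_image_path hUc hw (left_mem_Icc.2 zero_le_one)

theorem le_commHeight (hUc : Continuous U) {b : ℝ}
    (hb : ∀ z : ℝ → EuclideanSpace ℝ (Fin d), ContinuousOn z (Icc 0 1) → z 0 = x → z 1 = y →
      ∃ t ∈ Icc (0 : ℝ) 1, b ≤ U (z t)) :
    b ≤ commHeight U x y := by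
  refine le_csInf ⟨_, AffineMap.lineMap x y, AffineMap.lineMap_continuous.continuousOn,
    AffineMap.lineMap_apply_zero x y, AffineMap.lineMap_apply_one x y, rfl⟩ ?_
  rintro _ ⟨z, hz, h0, h1, rfl⟩
  obtain ⟨t, ht, hbt⟩ := hb z hz h0 h1
  exact hbt.trans (le_sSup_image_path hUc hz ht)

theorem commHeight_lt_of_joinedIn (hUc : Continuous U) {Λ : ℝ}
    (h : JoinedIn {z | U z < Λ} x y) : commHeight U x y < Λ := by
  let γ := h.somePath
  obtain ⟨_, ⟨t, rfl⟩, hmax⟩ :=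
    (isCompact_range γ.continuous).exists_isMaxOn (range_nonempty γ) hUc.continuousOn
  calc commHeight U x y ≤ sSup (U '' (γ.extend '' Icc 0 1)) :=
        commHeight_le hUc γ.continuous_extend.continuousOn γ.extend_zero γ.extend_one
    _ ≤ U (γ t) := by
        rw [γ.image_extend_of_subset subset_rfl]
        exact csSup_le ((range_nonempty γ).image U) (forall_mem_image.2 hmax)
    _ < Λ := h.somePath_mem t

theorem lt_commHeight_of_barrier (hUc : Continuous U)
    (hcoer : Tendsto U (cocompact (EuclideanSpace ℝ (Fin d))) atTop)
    (hfin : {x | gradient U x = 0}.Finite) {f : EuclideanSpace ℝ (Fin d) → ℝ}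
    (hf : Continuous f) {a b Λ : ℝ} (hab : a < b) (hΛ : ∀ z, f z ∈ Ioo a b → Λ ≤ U z)
    (hxy : Ioo a b ⊆ uIcc (f x) (f y)) : Λ < commHeight U x y := by
  obtain ⟨s, hs, hscrit⟩ := ((Ioo_infinite hab).sdiff (hfin.image f)).nonempty
  -- a point of `{f = s}` at height `Λ` would be a local minimum, hence critical
  have hstrict : ∀ z, f z = s → Λ < U z := by
    intro z hz
    refine (hΛ z (hz ▸ hs)).lt_of_ne fun hzΛ => hscrit ⟨z, IsLocalMin.gradient_eq_zero ?_, hz⟩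
    exact mem_of_superset ((isOpen_Ioo.preimage hf).mem_nhds (by rwa [mem_preimage, hz]))
      fun w hw => hzΛ ▸ hΛ w hw
  obtain ⟨η, hη, hηU⟩ := exists_pos_add_le_of_forall_lt hUc hcoer hf hstrict
  have hcross : Λ + η ≤ commHeight U x y := by
    refine le_commHeight hUc fun z hz h0 h1 => ?_
    have hfz : ContinuousOn (f ∘ z) (uIcc 0 1) := by
      rw [uIcc_of_le zero_le_one]
      exact hf.comp_continuousOn hz
    obtain ⟨t, ht, hts⟩ := intermediate_value_uIcc hfz (h0 ▸ h1 ▸ hxy hs)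
    exact ⟨t, uIcc_of_le (zero_le_one' ℝ) ▸ ht, hηU _ hts⟩
  linarith

theorem lt_commHeight_of_isLocalMin (hUc : Continuous U)
    (hcoer : Tendsto U (cocompact (EuclideanSpace ℝ (Fin d))) atTop)
    (hfin : {x | gradient U x = 0}.Finite) (hx : IsLocalMin U x) (hy : y ≠ x) :
    U x < commHeight U x y ∧ U x < commHeight U y x := by
  obtain ⟨R, hR, hRmin⟩ := eventually_nhds_iff_ball.1 (show ∀ᶠ z in 𝓝 x, U x ≤ U z from hx)
  have hb : 0 < min R (dist y x) := lt_min hR (dist_pos.2 hy)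
  have hΛ : ∀ z, dist z x ∈ Ioo 0 (min R (dist y x)) → U x ≤ U z :=
    fun z hz => hRmin z (mem_ball.2 (hz.2.trans_le (min_le_left _ _)))
  have hsub : Ioo 0 (min R (dist y x)) ⊆ uIcc (dist x x) (dist y x) := by
    rw [dist_self, uIcc_of_le dist_nonneg]
    exact Ioo_subset_Icc_self.trans (Icc_subset_Icc_right (min_le_right _ _))
  have hf : Continuous fun z => dist z x := continuous_id.dist continuous_const
  exact ⟨lt_commHeight_of_barrier hUc hcoer hfin hf hb hΛ hsub,
    lt_commHeight_of_barrier hUc hcoer hfin hf hb hΛ (uIcc_comm (dist x x) _ ▸ hsub)⟩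

theorem lt_commHeight_of_disjoint_closure (hUc : Continuous U)
    (hcoer : Tendsto U (cocompact (EuclideanSpace ℝ (Fin d))) atTop)
    (hfin : {x | gradient U x = 0}.Finite) {Λ : ℝ} {W : Set (EuclideanSpace ℝ (Fin d))}
    (hW : IsCompact (closure W)) (hsep : Disjoint (closure W) (closure ({z | U z < Λ} \ W)))
    (hx : x ∈ W) (hy : y ∈ {z | U z < Λ} \ W) : Λ < commHeight U x y := by
  obtain ⟨δ, hδ, hthick⟩ :=
    hW.exists_thickening_subset_open isClosed_closure.isOpen_compl hsep.subset_compl_right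
  have hWne : (closure W).Nonempty := ⟨x, subset_closure hx⟩
  have hfar : ∀ z ∈ {z | U z < Λ} \ W, δ ≤ infDist z (closure W) := fun z hz =>
    not_lt.1 fun hlt => hthick ((mem_thickening_iff_infDist_lt hWne).2 hlt) (subset_closure hz)
  refine lt_commHeight_of_barrier (f := fun z => infDist z (closure W)) hUc hcoer hfin
    (continuous_infDist_pt _) hδ (fun z hz => ?_) ?_
  · by_contra! hzΛ
    have hzW : z ∉ W := fun h => hz.1.ne' (infDist_zero_of_mem (subset_closure h))
    exact (hfar z ⟨hzΛ, hzW⟩).not_gt hz.2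
  · rw [infDist_zero_of_mem (subset_closure hx), uIcc_of_le infDist_nonneg]
    exact Ioo_subset_Icc_self.trans (Icc_subset_Icc_right (hfar y hy))

theorem exists_commHeight_eq_add_depth (hfin : {x | gradient U x = 0}.Finite)
    (htwo : ∃ y, IsLocalMin U y ∧ y ≠ x) :
    ∃ y, IsLocalMin U y ∧ y ≠ x ∧ commHeight U x y = U x + depth U x := by
  set heights := {h : ℝ | ∃ y, IsLocalMin U y ∧ y ≠ x ∧ h = commHeight U x y}
  have hfin' : heights.Finite := by
    refine (hfin.image (commHeight U x)).subset ?_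
    rintro _ ⟨y, hy, -, rfl⟩
    exact ⟨y, hy.gradient_eq_zero, rfl⟩
  obtain ⟨y, hy, hne⟩ := htwo
  obtain ⟨y', hy', hne', heq⟩ := Set.Nonempty.csInf_mem (s := heights) ⟨_, y, hy, hne, rfl⟩ hfin'
  exact ⟨y', hy', hne', by rw [depth, ← heq]; ring⟩

end CommHeight

theorem neighboring_component_exists_general
    (d : ℕ) (U : EuclideanSpace ℝ (Fin d) → ℝ)
    (hU : ContDiff ℝ 3 U)
    (hcoer : Filter.Tendsto U (Filter.cocompact (EuclideanSpace ℝ (Fin d))) Filter.atTop)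
    (hfin : {x | gradient U x = 0}.Finite)
    (m : EuclideanSpace ℝ (Fin d)) (hm : IsLocalMin U m)
    (htwo : ∃ m', IsLocalMin U m' ∧ m' ≠ m) :
    ∃ W' : Set (EuclideanSpace ℝ (Fin d)),
      (∃ x₀ ∈ {x | U x < U m + depth U m},
        W' = connectedComponentIn {x | U x < U m + depth U m} x₀) ∧
      connectedComponentIn {x | U x < U m + depth U m} m ∩ W' = ∅ ∧
      (closure (connectedComponentIn {x | U x < U m + depth U m} m) ∩
        closure W').Nonempty := by
  have hUc : Continuous U := hU.continuous
  obtain ⟨m', hm', hne, hΘ⟩ := exists_commHeight_eq_add_depth hfin htwo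
  set S := {x | U x < U m + depth U m}
  have hmS : m ∈ S := show U m < _ from
    hΘ ▸ (lt_commHeight_of_isLocalMin hUc hcoer hfin hm hne).1
  have hm'S : m' ∈ S := show U m' < _ from
    hΘ ▸ (lt_commHeight_of_isLocalMin hUc hcoer hfin hm' hne.symm).2
  have hm'W : m' ∉ connectedComponentIn S m := fun h =>
    (commHeight_lt_of_joinedIn hUc
      ((isOpen_lt hUc continuous_const).joinedIn_of_mem_connectedComponentIn hmS h)).ne hΘ
  obtain ⟨y, hy, hdisj, hmeet⟩ := exists_connectedComponentIn_closure_inter_nonempty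
    (finite_image_connectedComponentIn_sublevel hUc hcoer hfin _) fun hsep =>
      (lt_commHeight_of_disjoint_closure hUc hcoer hfin
        (isCompact_closure_connectedComponentIn_sublevel hUc hcoer _ m) hsep
        (mem_connectedComponentIn hmS) ⟨hm'S, hm'W⟩).ne' hΘ
  exact ⟨_, ⟨y, hy, rfl⟩, hdisj, hmeet⟩

/-- Let `U : ℝ^d → ℝ` be `C³`, coercive, with finitely many critical points,
all nondegenerate, and with at least two local minima.  Let `m` be a local minimum and let `W`
be the connected component of `{x : U x < U m + Γ(m)}` containing `m`.  Then there is another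
connected component `W'` of this set with `W ∩ W' = ∅` and `cl W ∩ cl W' ≠ ∅`. -/
theorem neighboring_component_exists
    (d : ℕ) (hd : 1 ≤ d) (U : EuclideanSpace ℝ (Fin d) → ℝ)
    (hU : ContDiff ℝ 3 U)
    (hcoer : Filter.Tendsto U (Filter.cocompact (EuclideanSpace ℝ (Fin d))) Filter.atTop)
    (hfin : {x | gradient U x = 0}.Finite)
    (hnd : ∀ x, gradient U x = 0 → IsUnit (hessianMatrix U x))
    (m : EuclideanSpace ℝ (Fin d)) (hm : IsLocalMin U m)
    (htwo : ∃ m', IsLocalMin U m' ∧ m' ≠ m) :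
    ∃ W' : Set (EuclideanSpace ℝ (Fin d)),
      (∃ x₀ ∈ {x | U x < U m + depth U m},
        W' = connectedComponentIn {x | U x < U m + depth U m} x₀) ∧
      connectedComponentIn {x | U x < U m + depth U m} m ∩ W' = ∅ ∧
      (closure (connectedComponentIn {x | U x < U m + depth U m} m) ∩
        closure W').Nonempty :=
  neighboring_component_exists_general d U hU hcoer hfin m hm htwo
end
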